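/- arXiv:1610.05839 — 6 statements merged into one kernel-verified Lean document; each statement's English description precedes it below -/
import Mathlib

section
/- Let T be the tournament on vertices v₁,...,v₅ with arc set {(v₁,v₂),(v₂,v₃),(v₃,v₄),(v₄,v₅),(v₅,v₁),(v₁,v₃),(v₁,v₄),(v₂,v₅),(v₃,v₅),(v₄,v₂)}. Then T is strongly connected, χ(T) = 5, and T contains no cycle with two blocks c(4,1). In particular, there exists a 5-chromatic strongly connected digraph containing no c(4,1), so the answer to the problem of Addario-Berry, Havet and Thomassé (whether every n-chromatic strongly connected digraph with n = k+ℓ ≥ 4 contains c(k,ℓ)) is negative for k = 4, ℓ = 1. -/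
universe u

/-- The underlying simple graph of the (simple) digraph with arc relation `A`. -/
def underlying {V : Type u} (A : V → V → Prop) : SimpleGraph V where
  Adj x y := x ≠ y ∧ (A x y ∨ A y x)
  symm := ⟨fun _ _ h => ⟨h.1.symm, h.2.symm⟩⟩
  loopless := ⟨fun _ h => h.1 rfl⟩

/-- `p` is a directed path of length `n` in the digraph `A`: its `n + 1` vertices
are pairwise distinct, and consecutive vertices are joined by arcs of `A`. -/
def IsDipath {V : Type u} (A : V → V → Prop) {n : ℕ} (p : Fin (n + 1) → V) : Prop :=
  Function.Injective p ∧ ∀ i : Fin n, A (p i.castSucc) (p i.succ)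

/-- The digraph `A` contains a cycle with two blocks `c(k, l)`: two internally
vertex-disjoint directed paths, of lengths at least `k` and at least `l`
respectively, from a common start vertex to a common (different) end vertex. -/
def HasTwoBlockCycle {V : Type u} (A : V → V → Prop) (k l : ℕ) : Prop :=
  ∃ (m n : ℕ) (p : Fin (m + 1) → V) (q : Fin (n + 1) → V),
    k ≤ m ∧ l ≤ n ∧ IsDipath A p ∧ IsDipath A q ∧
    p 0 = q 0 ∧ p (Fin.last m) = q (Fin.last n) ∧
    p 0 ≠ p (Fin.last m) ∧
    ∀ (i : Fin (m + 1)) (j : Fin (n + 1)),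
      p i = q j → (i = 0 ∧ j = 0) ∨ (i = Fin.last m ∧ j = Fin.last n)

/-- `c` is a directed cycle of length `n + 1` (so of length at least `2`) in the
digraph `A`: its `n + 1` vertices are pairwise distinct and consecutive vertices
(cyclically) are joined by arcs of `A`. -/
def IsCycle {V : Type u} (A : V → V → Prop) (n : ℕ) (c : Fin (n + 1) → V) : Prop :=
  1 ≤ n ∧ Function.Injective c ∧ ∀ i : Fin (n + 1), A (c i) (c (i + 1))

/-- `c` is a Hamiltonian directed cycle of the digraph `A`. -/
def IsHamCycle {V : Type u} (A : V → V → Prop) (n : ℕ) (c : Fin (n + 1) → V) : Prop :=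
  IsCycle A n c ∧ Function.Surjective c

/-- The arc relation of the tournament `T` on five vertices `v₁, …, v₅`
(rendered as `0, …, 4 : Fin 5`) with arcs
`(v₁,v₂),(v₂,v₃),(v₃,v₄),(v₄,v₅),(v₅,v₁),(v₁,v₃),(v₁,v₄),(v₂,v₅),(v₃,v₅),(v₄,v₂)`. -/
def TArc : Fin 5 → Fin 5 → Prop := fun i j =>
  (i, j) ∈ ({(0, 1), (1, 2), (2, 3), (3, 4), (4, 0),
              (0, 2), (0, 3), (1, 4), (2, 4), (3, 1)} : Set (Fin 5 × Fin 5))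

/-!
Every pair of distinct vertices of `T` is joined by an arc, so its underlying graph is `K₅`,
and `i ↦ i + 1` is a Hamiltonian cycle, so `T` is strongly connected. On five vertices a
`c(4, 1)` must consist of a Hamiltonian path `a b c d e` together with the arc `a → e`;
a finite check shows that `T` has no such configuration.
-/

lemma underlying_eq_top_of_total {V : Type u} {A : V → V → Prop}
    (hA : ∀ x y, x ≠ y → A x y ∨ A y x) : underlying A = ⊤ := by
  ext x y
  exact ⟨fun h => h.1, fun h => ⟨h, hA x y h⟩⟩

lemma chromaticNumber_underlying_of_total {V : Type u} [Fintype V] {A : V → V → Prop}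
    (hA : ∀ x y, x ≠ y → A x y ∨ A y x) : (underlying A).chromaticNumber = Fintype.card V := by
  rw [underlying_eq_top_of_total hA, SimpleGraph.chromaticNumber_top]

open Fin.NatCast in
lemma IsHamCycle.reflTransGen {V : Type u} {A : V → V → Prop} {n : ℕ} {c : Fin (n + 1) → V}
    (hc : IsHamCycle A n c) (u v : V) : Relation.ReflTransGen A u v := by
  have walk : ∀ (a : Fin (n + 1)) (k : ℕ), Relation.ReflTransGen A (c a) (c (a + k)) := by
    intro a k
    induction k with
    | zero => simpa using Relation.ReflTransGen.refl
    | succ k ih =>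
      rw [Nat.cast_succ, ← add_assoc]
      exact ih.tail (hc.1.2.2 _)
  obtain ⟨a, rfl⟩ := hc.2 u
  obtain ⟨b, rfl⟩ := hc.2 v
  simpa using walk a (b - a : Fin (n + 1))

/-- On at most `k + 1` vertices the first block of a `c(k, l)` is a Hamiltonian path, so the
second block has no interior vertex and is a single arc. -/
lemma HasTwoBlockCycle.exists_dipath_arc_of_card_le {V : Type u} [Fintype V]
    {A : V → V → Prop} {k l : ℕ} (hV : Fintype.card V ≤ k + 1) (h : HasTwoBlockCycle A k l) :
    ∃ p : Fin (k + 1) → V, IsDipath A p ∧ A (p 0) (p (Fin.last k)) := by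
  obtain ⟨m, n, p, q, hkm, -, hp, hq, hstart, hend, hne, hdisj⟩ := h
  have hcard : m + 1 = Fintype.card V := by
    have := Fintype.card_le_of_injective p hp.1
    simp only [Fintype.card_fin] at this
    omega
  obtain rfl : m = k := by omega
  have hsurj : Function.Surjective p :=
    ((Fintype.bijective_iff_injective_and_card p).2 ⟨hp.1, by simpa using hcard⟩).2
  have hn : n = 1 := by
    rcases n with _ | _ | n
    · exact absurd (hstart.trans (hend.symm.trans rfl)) hne
    · rfl
    · obtain ⟨i, hi⟩ := hsurj (q 1)
      rcases hdisj i 1 hi with ⟨-, h⟩ | ⟨-, h⟩ <;> simp [Fin.ext_iff] at h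
  subst hn
  refine ⟨p, hp, ?_⟩
  rw [hstart, hend]
  exact hq.2 0

instance (i j : Fin 5) : Decidable (TArc i j) :=
  decidable_of_iff ((i, j) ∈ ({(0, 1), (1, 2), (2, 3), (3, 4), (4, 0),
    (0, 2), (0, 3), (1, 4), (2, 4), (3, 1)} : Finset (Fin 5 × Fin 5))) (by simp [TArc])

lemma TArc_total : ∀ i j : Fin 5, i ≠ j → TArc i j ∨ TArc j i := by
  decide

lemma TArc_asymm : ∀ i j : Fin 5, TArc i j → ¬ TArc j i := by
  decide

lemma TArc_isHamCycle : IsHamCycle TArc 4 id :=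
  ⟨⟨by norm_num, Function.injective_id, by decide⟩, Function.surjective_id⟩

set_option maxRecDepth 8000 in
lemma TArc_not_arc_of_dipath_four : ∀ a b c d e : Fin 5,
    a ≠ c → a ≠ d → b ≠ d → b ≠ e → c ≠ e →
    TArc a b → TArc b c → TArc c d → TArc d e → ¬ TArc a e := by
  decide

lemma TArc_not_hasTwoBlockCycle : ¬ HasTwoBlockCycle TArc 4 1 := by
  intro h
  obtain ⟨p, hp, harc⟩ := h.exists_dipath_arc_of_card_le (by simp)
  have hne : ∀ i j : Fin 5, i ≠ j → p i ≠ p j := fun _ _ hij => hp.1.ne hij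
  exact TArc_not_arc_of_dipath_four (p 0) (p 1) (p 2) (p 3) (p 4)
    (hne 0 2 (by decide)) (hne 0 3 (by decide)) (hne 1 3 (by decide))
    (hne 1 4 (by decide)) (hne 2 4 (by decide)) (hp.2 0) (hp.2 1) (hp.2 2) (hp.2 3) harc

/-- The tournament `T` above is strongly connected, has `χ(T) = 5`, and contains no
cycle with two blocks `c(4, 1)`.  In particular there exists a `5`-chromatic strongly
connected digraph with no `c(4, 1)`: the answer to the problem of Addario-Berry,
Havet and Thomassé is negative for `k = 4`, `l = 1`. -/
theorem tournament_counterexample :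
    (∀ i j : Fin 5, i ≠ j → (TArc i j ∨ TArc j i)) ∧
    (∀ i j : Fin 5, TArc i j → ¬ TArc j i) ∧
    (∀ u v : Fin 5, Relation.ReflTransGen TArc u v) ∧
    (underlying TArc).chromaticNumber = 5 ∧
    ¬ HasTwoBlockCycle TArc 4 1 ∧
    ∃ (W : Type) (_ : Fintype W) (B : W → W → Prop),
      Irreflexive B ∧
      (∀ u v : W, Relation.ReflTransGen B u v) ∧
      (underlying B).chromaticNumber = 5 ∧
      ¬ HasTwoBlockCycle B 4 1 := by
  have hchr : (underlying TArc).chromaticNumber = 5 := by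
    simpa using chromaticNumber_underlying_of_total TArc_total
  exact ⟨TArc_total, TArc_asymm, TArc_isHamCycle.reflTransGen, hchr, TArc_not_hasTwoBlockCycle,
    Fin 5, inferInstance, TArc, fun a ha => TArc_asymm a a ha ha, TArc_isHamCycle.reflTransGen,
    hchr, TArc_not_hasTwoBlockCycle⟩
end

section
/- Let D be a digraph with a Hamiltonian directed cycle C and let G be the underlying graph of D. Suppose u, v, x, y are four distinct vertices such that uv and xy are edges of G not lying on C, with x on the subpath uCv and y on the subpath vCu. Let k and ℓ be positive integers with |uCx| ≥ k−1 and |vCy| ≥ ℓ−1. Then D contains a cycle with two blocks c(k,ℓ), unless (a) |uCx| = k−1 and both (u,v) and (y,x) are arcs of D, or (b) |vCy| = ℓ−1 and both (v,u) and (x,y) are arcs of D. -/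
universe u

/-!
Measure positions along `C` from a chord endpoint, so that `C` becomes a path
`0, 1, …, n` and each candidate path is a sequence of offsets. With `d = |uCx|`, `e = |vCy|`,
the chords `uv` and `xy` cross, and in each of the four orientations two internally disjoint
paths made of segments of `C` and the chords run to a common end:
* `u → v`, `x → y`: `uCx → y` and `u → vCy`, of lengths `d + 1` and `e + 1`;
* `u → v`, `y → x`: `uCx` and `u → vCy → x`, of lengths `d` and `e + 2`, too short only
  when `d = k - 1`;
and symmetrically, starting from `v`, in the other two.
-/

namespace Fin

theorem val_sub_add_val_sub_of_ne {n : ℕ} {a b : Fin n} (h : a ≠ b) :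
    (a - b).val + (b - a).val = n := by
  rcases lt_or_gt_of_ne h with h | h <;> rw [coe_sub_iff_lt.2 h, sub_val_of_le h.le] <;> omega

theorem val_sub_eq_add_of_lt {n : ℕ} [NeZero n] {a b c : Fin n}
    (h : (b - a).val + (c - b).val < n) :
    (c - a).val = (b - a).val + (c - b).val := by
  rw [← val_add_eq_of_add_lt h, add_comm, sub_add_sub_cancel]

end Fin

section Offsets

variable {V : Type u} {A : V → V → Prop}

namespace HasTwoBlockCycle

theorem mono {k l k' l' : ℕ} (h : HasTwoBlockCycle A k l) (hk : k' ≤ k) (hl : l' ≤ l) :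
    HasTwoBlockCycle A k' l' := by
  obtain ⟨m, m', p, q, hkm, hlm, hp, hq, h0, hlast, hne, hdisj⟩ := h
  exact ⟨m, m', p, q, hk.trans hkm, hl.trans hlm, hp, hq, h0, hlast, hne, hdisj⟩

theorem symm {k l : ℕ} (h : HasTwoBlockCycle A k l) : HasTwoBlockCycle A l k := by
  obtain ⟨m, m', p, q, hkm, hlm, hp, hq, h0, hlast, hne, hdisj⟩ := h
  refine ⟨m', m, q, p, hlm, hkm, hq, hp, h0.symm, hlast.symm, by rwa [← h0, ← hlast], ?_⟩
  intro j i h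
  rcases hdisj i j h.symm with h | h
  exacts [.inl h.symm, .inr h.symm]

theorem of_offsets {w : ℕ → V} {N : ℕ} (hw : Set.InjOn w (Set.Iio N)) {k l m m' : ℕ}
    {o o' : ℕ → ℕ} (hkm : k ≤ m) (hlm : l ≤ m')
    (ho : ∀ i ≤ m, o i < N) (ho' : ∀ j ≤ m', o' j < N)
    (hinj : ∀ i ≤ m, ∀ j ≤ m, o i = o j → i = j)
    (hinj' : ∀ i ≤ m', ∀ j ≤ m', o' i = o' j → i = j)
    (harc : ∀ i < m, A (w (o i)) (w (o (i + 1))))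
    (harc' : ∀ j < m', A (w (o' j)) (w (o' (j + 1))))
    (h0 : o 0 = o' 0) (hlast : o m = o' m') (hne : o 0 ≠ o m)
    (hdisj : ∀ i ≤ m, ∀ j ≤ m', o i = o' j → (i = 0 ∧ j = 0) ∨ (i = m ∧ j = m')) :
    HasTwoBlockCycle A k l := by
  refine ⟨m, m', fun i => w (o i), fun j => w (o' j), hkm, hlm, ⟨?_, ?_⟩, ⟨?_, ?_⟩,
    congrArg w h0, congrArg w hlast, fun h => hne (hw (ho 0 (Nat.zero_le _)) (ho m le_rfl) h), ?_⟩
  · intro i j h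
    exact Fin.ext (hinj i i.is_le j j.is_le (hw (ho i i.is_le) (ho j j.is_le) h))
  · exact fun i => harc i i.isLt
  · intro i j h
    exact Fin.ext (hinj' i i.is_le j j.is_le (hw (ho' i i.is_le) (ho' j j.is_le) h))
  · exact fun j => harc' j j.isLt
  · intro i j h
    simp only [Fin.ext_iff, Fin.val_zero, Fin.val_last]
    exact hdisj i i.is_le j j.is_le (hw (ho i i.is_le) (ho' j j.is_le) h)

end HasTwoBlockCycle

theorem hasTwoBlockCycle_of_forward_chords {w : ℕ → V} {N p q r : ℕ}
    (hw : Set.InjOn w (Set.Iio N)) (hstep : ∀ t, A (w t) (w (t + 1)))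
    (hpq : p < q) (hqr : q + r < N) (h0q : A (w 0) (w q)) (hpr : A (w p) (w (q + r))) :
    HasTwoBlockCycle A (p + 1) (r + 1) := by
  refine HasTwoBlockCycle.of_offsets hw (m := p + 1) (m' := r + 1)
    (o := fun i => if i ≤ p then i else q + r) (o' := fun j => if j = 0 then 0 else q + j - 1)
    le_rfl le_rfl ?_ ?_ ?_ ?_ ?_ ?_ (by simp) (by simp) (by simp; omega) ?_
  · intro i _; split_ifs <;> omega
  · intro j _; split_ifs <;> omega
  · intro i _ j _; split_ifs <;> omega
  · intro i _ j _; split_ifs <;> omega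
  · intro i hi
    rcases Nat.lt_succ_iff_lt_or_eq.1 hi with hi | rfl
    · simpa [hi.le, hi] using hstep i
    · simpa using hpr
  · rintro (_ | j) _
    · simpa using h0q
    · simpa [add_assoc] using hstep (q + j)
  · intro i _ j _; split_ifs <;> omega

theorem hasTwoBlockCycle_of_forward_backward_chords {w : ℕ → V} {N p q r : ℕ}
    (hw : Set.InjOn w (Set.Iio N)) (hstep : ∀ t, A (w t) (w (t + 1)))
    (hp : 0 < p) (hpq : p < q) (hqr : q + r < N)
    (h0q : A (w 0) (w q)) (hrp : A (w (q + r)) (w p)) :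
    HasTwoBlockCycle A p (r + 2) := by
  refine HasTwoBlockCycle.of_offsets hw (m := p) (m' := r + 2) (o := id)
    (o' := fun j => if j = 0 then 0 else if j ≤ r + 1 then q + j - 1 else p)
    le_rfl le_rfl ?_ ?_ ?_ ?_ ?_ ?_ rfl (by simp) (by simp; omega) ?_
  · intro i _; dsimp only [id]; omega
  · intro j _; split_ifs <;> omega
  · intro i _ j _; exact id
  · intro i _ j _; split_ifs <;> omega
  · exact fun i _ => hstep i
  · rintro (_ | j) hj
    · simpa using h0q
    · rcases Nat.lt_succ_iff_lt_or_eq.1 (Nat.succ_lt_succ_iff.1 hj) with hj | rfl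
      · simpa [hj.le, hj, add_assoc] using hstep (q + j)
      · simpa using hrp
  · intro i _ j _; dsimp only [id]; split_ifs <;> omega

end Offsets

section Cycle

open Fin.NatCast

variable {V : Type u} {A : V → V → Prop} {n : ℕ} {c : Fin (n + 1) → V}

def cycleFrom (c : Fin (n + 1) → V) (b : Fin (n + 1)) (t : ℕ) : V := c (b + t)

@[simp]
theorem cycleFrom_zero (b : Fin (n + 1)) : cycleFrom c b 0 = c b := by
  simp [cycleFrom]

@[simp]
theorem cycleFrom_val_sub (a b : Fin (n + 1)) : cycleFrom c b (a - b).val = c a := by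
  simp [cycleFrom]

theorem Function.Injective.injOn_cycleFrom (hc : Function.Injective c) (b : Fin (n + 1)) :
    Set.InjOn (cycleFrom c b) (Set.Iio (n + 1)) := by
  intro s hs t ht h
  have := congrArg Fin.val (add_left_cancel (hc h))
  rwa [Fin.val_cast_of_lt hs, Fin.val_cast_of_lt ht] at this

theorem IsCycle.cycleFrom_succ (hc : IsCycle A n c) (b : Fin (n + 1)) (t : ℕ) :
    A (cycleFrom c b t) (cycleFrom c b (t + 1)) := by
  simpa [cycleFrom, add_assoc] using hc.2.2 (b + t)

theorem IsCycle.hasTwoBlockCycle_of_forward_chords (hc : IsCycle A n c) {u v x y : Fin (n + 1)}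
    (hx : (x - u).val < (v - u).val) (hy : (v - u).val + (y - v).val ≤ n)
    (huv : A (c u) (c v)) (hxy : A (c x) (c y)) :
    HasTwoBlockCycle A ((x - u).val + 1) ((y - v).val + 1) := by
  have hyu : (y - u).val = (v - u).val + (y - v).val := Fin.val_sub_eq_add_of_lt (by omega)
  refine _root_.hasTwoBlockCycle_of_forward_chords (hc.2.1.injOn_cycleFrom u)
    (hc.cycleFrom_succ u) hx (by omega : (v - u).val + (y - v).val < n + 1) ?_ ?_
  · simpa using huv
  · simpa [← hyu] using hxy

theorem IsCycle.hasTwoBlockCycle_of_forward_backward_chords (hc : IsCycle A n c)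
    {u v x y : Fin (n + 1)} (hx : 0 < (x - u).val) (hxv : (x - u).val < (v - u).val)
    (hy : (v - u).val + (y - v).val ≤ n) (huv : A (c u) (c v)) (hyx : A (c y) (c x)) :
    HasTwoBlockCycle A (x - u).val ((y - v).val + 2) := by
  have hyu : (y - u).val = (v - u).val + (y - v).val := Fin.val_sub_eq_add_of_lt (by omega)
  refine _root_.hasTwoBlockCycle_of_forward_backward_chords (hc.2.1.injOn_cycleFrom u)
    (hc.cycleFrom_succ u) hx hxv (by omega : (v - u).val + (y - v).val < n + 1) ?_ ?_
  · simpa using huv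
  · simpa [← hyu] using hyx

end Cycle

theorem crossing_lemma_general {V : Type u}
    (A : V → V → Prop) (n : ℕ) (c : Fin (n + 1) → V)
    (hham : IsHamCycle A n c)
    (iu iv ix iy : Fin (n + 1))
    (k l : ℕ)
    (hx : 0 < (ix - iu).val ∧ (ix - iu).val < (iv - iu).val)
    (hy : 0 < (iy - iv).val ∧ (iy - iv).val < (iu - iv).val)
    (huv : A (c iu) (c iv) ∨ A (c iv) (c iu))
    (hxy : A (c ix) (c iy) ∨ A (c iy) (c ix))
    (hkx : k - 1 ≤ (ix - iu).val) (hly : l - 1 ≤ (iy - iv).val) :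
    HasTwoBlockCycle A k l ∨
      ((ix - iu).val = k - 1 ∧ A (c iu) (c iv) ∧ A (c iy) (c ix)) ∨
      ((iy - iv).val = l - 1 ∧ A (c iv) (c iu) ∧ A (c ix) (c iy)) := by
  obtain ⟨hc, -⟩ := hham
  have hround : (iv - iu).val + (iu - iv).val = n + 1 :=
    Fin.val_sub_add_val_sub_of_ne fun h => by simp [h] at hx
  rcases huv with huv | hvu <;> rcases hxy with hxy | hyx
  · exact .inl <| (hc.hasTwoBlockCycle_of_forward_chords hx.2 (by omega) huv hxy).mono
      (by omega) (by omega)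
  · by_cases hk : k ≤ (ix - iu).val
    · exact .inl <| (hc.hasTwoBlockCycle_of_forward_backward_chords hx.1 hx.2 (by omega) huv
        hyx).mono hk (by omega)
    · exact .inr <| .inl ⟨by omega, huv, hyx⟩
  · by_cases hl : l ≤ (iy - iv).val
    · exact .inl <| (hc.hasTwoBlockCycle_of_forward_backward_chords hy.1 hy.2 (by omega) hvu
        hxy).symm.mono (by omega) hl
    · exact .inr <| .inr ⟨by omega, hvu, hxy⟩
  · exact .inl <| (hc.hasTwoBlockCycle_of_forward_chords hy.2 (by omega) hvu hyx).symm.mono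
      (by omega) (by omega)

/-- The crossing lemma (Lemma 2.1).  Let `D` be a digraph with Hamiltonian directed
cycle `C = c 0, c 1, …, c n, c 0`, with `u = c iu`, `v = c iv`, `x = c ix`, `y = c iy`
four distinct vertices such that `uv, xy ∈ E(G) \ E(C)`, `x` lies inside the subpath
`uCv` and `y` lies inside the subpath `vCu` (lengths along the cycle are measured by
subtraction in `Fin (n+1)`, so `|uCx| = (ix - iu).val` and `|vCy| = (iy - iv).val`).
If `|uCx| ≥ k − 1` and `|vCy| ≥ l − 1`, then `D` contains a two-block cycle `c(k, l)`,
unless (a) `|uCx| = k − 1` and `(u,v), (y,x) ∈ A(D)`, or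
(b) `|vCy| = l − 1` and `(v,u), (x,y) ∈ A(D)`. -/
theorem crossing_lemma {V : Type u}
    (A : V → V → Prop) (n : ℕ) (c : Fin (n + 1) → V)
    (hham : IsHamCycle A n c)
    (iu iv ix iy : Fin (n + 1))
    (hdist : iu ≠ iv ∧ iu ≠ ix ∧ iu ≠ iy ∧ iv ≠ ix ∧ iv ≠ iy ∧ ix ≠ iy)
    (k l : ℕ) (hk : 1 ≤ k) (hl : 1 ≤ l)
    (hx : 0 < (ix - iu).val ∧ (ix - iu).val < (iv - iu).val)
    (hy : 0 < (iy - iv).val ∧ (iy - iv).val < (iu - iv).val)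
    (huv : A (c iu) (c iv) ∨ A (c iv) (c iu))
    (huvC : iv ≠ iu + 1 ∧ iu ≠ iv + 1)
    (hxy : A (c ix) (c iy) ∨ A (c iy) (c ix))
    (hxyC : iy ≠ ix + 1 ∧ ix ≠ iy + 1)
    (hkx : k - 1 ≤ (ix - iu).val) (hly : l - 1 ≤ (iy - iv).val) :
    HasTwoBlockCycle A k l ∨
      ((ix - iu).val = k - 1 ∧ A (c iu) (c iv) ∧ A (c iy) (c ix)) ∨
      ((iy - iv).val = l - 1 ∧ A (c iv) (c iu) ∧ A (c ix) (c iy)) :=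
  crossing_lemma_general A n c hham iu iv ix iy k l hx hy huv hxy hkx hly
end

section
/- With the iterated contraction construction as in the context: for every j ∈ {0, 1, ..., m}, the digraph D^(j) contains no cycle with two blocks c(k,ℓ). -/
universe u

/-- `A'` (a digraph on `W'`) is the contraction `A/S` of the digraph `A` on `W`,
via the projection map `f : W → W'` which collapses `S` to a single new vertex and
is injective elsewhere.  Arcs of `A'` are induced by arcs of `A` (with no loop
created at the contracted vertex). -/
def IsContractionOf {W : Type u} {W' : Type u} (A' : W' → W' → Prop)
    (A : W → W → Prop) (f : W → W') (S : Set W) : Prop :=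
  Function.Surjective f ∧
  (∀ a b : W, a ∈ S → b ∈ S → f a = f b) ∧
  (∀ a b : W, f a = f b → a = b ∨ (a ∈ S ∧ b ∈ S)) ∧
  (∀ x y : W', A' x y ↔ x ≠ y ∧ ∃ a b : W, f a = x ∧ f b = y ∧ A a b)

/-!
Contracting a vertex set `S` that is strongly connected in `D` cannot create a `c(k, l)`.
A `c(k, l)` of `D / S` avoiding the contracted vertex is already one of `D`. If the contracted
vertex is internal to a block, replace it by a path inside `S` from the vertex where the block
enters `S` to the vertex where it leaves; this only lengthens the block. If it is the common
start, let `b` be the vertex of `S` where the second block leaves; start both blocks at `b`,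
prefixing the first one with a path inside `S` from `b` to its own exit vertex. The case of the
common end is the same after reversing all arcs. The vertex set of a directed cycle is strongly
connected, so the theorem follows by induction on `j`.
-/

namespace List

variable {α : Type*}

theorem head?_ofFn_succ {n : ℕ} (f : Fin (n + 1) → α) :
    (ofFn f).head? = some (f 0) := by
  simp

theorem getLast?_ofFn_succ {n : ℕ} (f : Fin (n + 1) → α) :
    (ofFn f).getLast? = some (f (Fin.last n)) := by
  rw [ofFn_succ', concat_eq_append, getLast?_append_of_ne_nil] <;> simp

theorem exists_ofFn_eq_of_ne_nil {l : List α} (hl : l ≠ []) :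
    ∃ (n : ℕ) (P : Fin (n + 1) → α), ofFn P = l := by
  obtain ⟨a, t, rfl⟩ := exists_cons_of_ne_nil hl
  exact ⟨t.length, _, ofFn_getElem (xs := a :: t)⟩

theorem getLast?_eq_of_cons {a b : α} {l : List α} (h : (a :: l).getLast? = some b)
    (hne : a ≠ b) : l.getLast? = some b := by
  rw [getLast?_cons] at h
  cases hl : l.getLast? with
  | none => exact absurd (by simpa [hl] using h) hne
  | some w => simpa [hl] using h

end List

section

variable {V : Type u} {A : V → V → Prop} {k l : ℕ} {u v : V} {p q : List V}

-- Paths are vertex lists, so that a path is lifted through the contracted vertex by splicing.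
def IsListPath (A : V → V → Prop) (u v : V) (p : List V) : Prop :=
  p.IsChain A ∧ p.Nodup ∧ p.head? = some u ∧ p.getLast? = some v

structure IsTwoBlockCycle (A : V → V → Prop) (k l : ℕ) (u v : V) (p q : List V) : Prop where
  ne : u ≠ v
  left : IsListPath A u v p
  right : IsListPath A u v q
  length_left : k < p.length
  length_right : l < q.length
  inter : ∀ x ∈ p, x ∈ q → x = u ∨ x = v

theorem IsListPath.ne_nil (h : IsListPath A u v p) : p ≠ [] := by
  rintro rfl
  simp [IsListPath] at h

theorem isDipath_iff_isListPath {n : ℕ} {p : Fin (n + 1) → V} :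
    IsDipath A p ↔ IsListPath A (p 0) (p (Fin.last n)) (List.ofFn p) := by
  rw [IsDipath, IsListPath, List.isChain_ofFn, Fin.forall_iff, List.nodup_ofFn,
    List.head?_ofFn_succ, List.getLast?_ofFn_succ]
  simp [Fin.castSucc, Fin.succ, and_comm]

theorem hasTwoBlockCycle_iff :
    HasTwoBlockCycle A k l ↔ ∃ u v p q, IsTwoBlockCycle A k l u v p q := by
  constructor
  · rintro ⟨m, n, p, q, hkm, hln, hp, hq, h0, hlast, hne, hinter⟩
    refine ⟨p 0, p (Fin.last m), List.ofFn p, List.ofFn q, hne,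
      isDipath_iff_isListPath.1 hp, ?_, by simpa using hkm, by simpa using hln, ?_⟩
    · rw [h0, hlast]; exact isDipath_iff_isListPath.1 hq
    · simp only [List.mem_ofFn]
      rintro _ ⟨i, rfl⟩ ⟨j, hji⟩
      rcases hinter i j hji.symm with ⟨rfl, -⟩ | ⟨rfl, -⟩ <;> simp
  · rintro ⟨u, v, p, q, h⟩
    obtain ⟨m, P, rfl⟩ := List.exists_ofFn_eq_of_ne_nil h.left.ne_nil
    obtain ⟨n, Q, rfl⟩ := List.exists_ofFn_eq_of_ne_nil h.right.ne_nil
    obtain ⟨-, hPn, hP0, hPl⟩ := h.left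
    obtain ⟨-, hQn, hQ0, hQl⟩ := h.right
    rw [List.head?_ofFn_succ, Option.some_inj] at hP0 hQ0
    rw [List.getLast?_ofFn_succ, Option.some_inj] at hPl hQl
    subst hP0 hPl
    have hPinj := List.nodup_ofFn.1 hPn
    have hQinj := List.nodup_ofFn.1 hQn
    refine ⟨m, n, P, Q, by simpa using h.length_left, by simpa using h.length_right,
      isDipath_iff_isListPath.2 h.left, isDipath_iff_isListPath.2 (hQ0 ▸ hQl ▸ h.right),
      hQ0.symm, hQl.symm, h.ne, fun i j hij => ?_⟩
    rcases h.inter (P i) (List.mem_ofFn.2 ⟨i, rfl⟩) (List.mem_ofFn.2 ⟨j, hij.symm⟩) with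
      h0 | hl
    · exact .inl ⟨hPinj h0, hQinj (hij.symm.trans (h0.trans hQ0.symm))⟩
    · exact .inr ⟨hPinj hl, hQinj (hij.symm.trans (hl.trans hQl.symm))⟩

theorem IsListPath.reverse (h : IsListPath A u v p) : IsListPath (flip A) v u p.reverse :=
  ⟨List.isChain_reverse.2 h.1, List.nodup_reverse.2 h.2.1, by simpa using h.2.2.2,
    by simpa using h.2.2.1⟩

theorem IsTwoBlockCycle.swap (h : IsTwoBlockCycle A k l u v p q) :
    IsTwoBlockCycle A l k u v q p :=
  ⟨h.ne, h.right, h.left, h.length_right, h.length_left, fun x hq hp => h.inter x hp hq⟩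

theorem IsTwoBlockCycle.reverse (h : IsTwoBlockCycle A k l u v p q) :
    IsTwoBlockCycle (flip A) k l v u p.reverse q.reverse :=
  ⟨h.ne.symm, h.left.reverse, h.right.reverse, by simpa using h.length_left,
    by simpa using h.length_right, fun x hp hq =>
      (h.inter x (List.mem_reverse.1 hp) (List.mem_reverse.1 hq)).symm⟩

def IsStronglyConnectedOn (A : V → V → Prop) (S : Set V) : Prop :=
  ∀ a ∈ S, ∀ b ∈ S, ∃ r, IsListPath A a b r ∧ ∀ x ∈ r, x ∈ S

theorem IsStronglyConnectedOn.reverse {S : Set V} (h : IsStronglyConnectedOn A S) :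
    IsStronglyConnectedOn (flip A) S := fun a ha b hb =>
  let ⟨r, hr, hrS⟩ := h b hb a ha
  ⟨r.reverse, hr.reverse, fun x hx => hrS x (List.mem_reverse.1 hx)⟩

open Fin.NatCast in
theorem IsCycle.isStronglyConnectedOn_range {n : ℕ} {c : Fin (n + 1) → V} (hc : IsCycle A n c) :
    IsStronglyConnectedOn A (Set.range c) := by
  rintro _ ⟨e, rfl⟩ _ ⟨e', rfl⟩
  obtain ⟨-, hinj, harc⟩ := hc
  have hd : (e' - e).val < n + 1 := (e' - e).isLt
  refine ⟨(List.range ((e' - e).val + 1)).map fun t : ℕ => c (e + t),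
    ⟨?_, ?_, ?_, ?_⟩, ?_⟩
  · rw [List.isChain_map, List.isChain_range_succ]
    intro t _
    simpa [add_assoc] using harc (e + t)
  · refine List.nodup_range.map_on fun s hs t ht hst => ?_
    have := congrArg Fin.val (add_left_cancel (hinj hst))
    simp only [Fin.val_natCast, List.mem_range] at this hs ht
    rwa [Nat.mod_eq_of_lt (by omega), Nat.mod_eq_of_lt (by omega)] at this
  · simp [List.head?_range]
  · simp [List.getLast?_range, Fin.cast_val_eq_self]
  · simp

end

namespace IsContractionOf

variable {W W' : Type u} {A : W → W → Prop} {A' : W' → W' → Prop} {f : W → W'} {S : Set W}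
  {g : W' → W}

theorem reverse (hc : IsContractionOf A' A f S) : IsContractionOf (flip A') (flip A) f S := by
  obtain ⟨hsurj, hS, hinj, hA⟩ := hc
  refine ⟨hsurj, hS, hinj, fun x y => ?_⟩
  rw [flip, hA y x]
  exact ⟨fun ⟨hne, a, b, ha, hb, hab⟩ => ⟨hne.symm, b, a, hb, ha, hab⟩,
    fun ⟨hne, a, b, ha, hb, hab⟩ => ⟨hne.symm, b, a, hb, ha, hab⟩⟩

-- `g` is a section of `f`: the contracted vertex is the unique `x` with `g x ∈ S`, and every
-- other `x` has `g x` as its only preimage.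
variable (hc : IsContractionOf A' A f S) (hg : Function.RightInverse g f)
include hc hg

theorem eq_of_section_mem {x y : W'} (hx : g x ∈ S) (hy : g y ∈ S) : x = y := by
  rw [← hg x, ← hg y]
  exact hc.2.1 _ _ hx hy

theorem eq_section {a : W} {x : W'} (ha : f a = x) (hx : g x ∉ S) : a = g x :=
  (hc.2.2.1 a (g x) (ha.trans (hg x).symm)).resolve_right fun h => hx h.2

theorem mem_of_section_mem {a : W} {x : W'} (ha : f a = x) (hx : g x ∈ S) : a ∈ S :=
  (hc.2.2.1 a (g x) (ha.trans (hg x).symm)).elim (· ▸ hx) And.left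

theorem adj_section {x y : W'} (hxy : A' x y) (hx : g x ∉ S) (hy : g y ∉ S) :
    A (g x) (g y) := by
  obtain ⟨-, a, b, ha, hb, hab⟩ := (hc.2.2.2 x y).1 hxy
  rwa [← hc.eq_section hg ha hx, ← hc.eq_section hg hb hy]

theorem exists_adj_mem {x y : W'} (hxy : A' x y) (hx : g x ∉ S) (hy : g y ∈ S) :
    ∃ b ∈ S, A (g x) b := by
  obtain ⟨-, a, b, ha, hb, hab⟩ := (hc.2.2.2 x y).1 hxy
  exact ⟨b, hc.mem_of_section_mem hg hb hy, hc.eq_section hg ha hx ▸ hab⟩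

theorem exists_mem_adj {x y : W'} (hxy : A' x y) (hx : g x ∈ S) (hy : g y ∉ S) :
    ∃ a ∈ S, A a (g y) :=
  hc.reverse.exists_adj_mem hg hxy hy hx

theorem isChain_map {p : List W'} (hp : p.IsChain A') (hpS : ∀ x ∈ p, g x ∉ S) :
    (p.map g).IsChain A :=
  List.isChain_map g |>.2 <| hp.imp_of_mem_imp fun x y hx hy hxy =>
    hc.adj_section hg hxy (hpS x hx) (hpS y hy)

theorem isListPath_map {u v : W'} {p : List W'} (hp : IsListPath A' u v p)
    (hpS : ∀ x ∈ p, g x ∉ S) : IsListPath A (g u) (g v) (p.map g) :=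
  ⟨hc.isChain_map hg hp.1 hpS, hp.2.1.map hg.injective, by simp [hp.2.2.1],
    by simp [hp.2.2.2]⟩

theorem exists_mem_adj_head {x : W'} {p : List W'} (hp : (x :: p).IsChain A') (hx : g x ∈ S)
    (hpS : ∀ y ∈ p, g y ∉ S) : ∃ b ∈ S, ∀ y ∈ p.head?, A b (g y) := by
  cases p with
  | nil => exact ⟨g x, hx, by simp⟩
  | cons y p =>
    obtain ⟨a, ha, hay⟩ :=
      hc.exists_mem_adj hg (List.isChain_cons_cons.1 hp).1 hx (hpS y (by simp))
    exact ⟨a, ha, by simpa using hay⟩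

theorem exists_adj_mem_getLast {x : W'} {p : List W'} (hp : (p ++ [x]).IsChain A')
    (hx : g x ∈ S) (hpS : ∀ y ∈ p, g y ∉ S) :
    ∃ a ∈ S, ∀ y ∈ p.getLast?, A (g y) a := by
  have hrev : (x :: p.reverse).IsChain (flip A') := by
    simpa using (List.isChain_reverse (R := flip A')).2 hp
  obtain ⟨a, ha, hadj⟩ := hc.reverse.exists_mem_adj_head hg hrev hx (by simpa using hpS)
  exact ⟨a, ha, fun y hy => hadj y (by simpa using hy)⟩

theorem isChain_and_nodup_splice {p₁ p₂ : List W'} {r : List W} {a b : W}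
    (hp₁ : p₁.IsChain A') (hp₂ : p₂.IsChain A') (hnd : (p₁ ++ p₂).Nodup)
    (hpS : ∀ y ∈ p₁ ++ p₂, g y ∉ S)
    (hr : IsListPath A a b r) (hrS : ∀ z ∈ r, z ∈ S)
    (hin : ∀ y ∈ p₁.getLast?, A (g y) a) (hout : ∀ y ∈ p₂.head?, A b (g y)) :
    (p₁.map g ++ r ++ p₂.map g).IsChain A ∧ (p₁.map g ++ r ++ p₂.map g).Nodup := by
  obtain ⟨hrc, hrn, hra, hrb⟩ := hr
  simp only [List.mem_append] at hpS
  refine ⟨?_, ?_⟩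
  · refine List.isChain_append.2 ⟨List.isChain_append.2 ⟨hc.isChain_map hg hp₁ ?_, hrc, ?_⟩,
      hc.isChain_map hg hp₂ ?_, ?_⟩
    · exact fun y hy => hpS y (.inl hy)
    · simpa [hra] using hin
    · exact fun y hy => hpS y (.inr hy)
    · simpa [List.getLast?_append, hrb] using hout
  · have hmap : (p₁.map g ++ p₂.map g).Nodup := by
      rw [← List.map_append]; exact hnd.map hg.injective
    rw [List.nodup_append] at hmap
    simp only [List.nodup_append, List.mem_append, List.mem_map]
    refine ⟨⟨hmap.1, hrn, ?_⟩, hmap.2.1, ?_⟩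
    · rintro _ ⟨y, hy, rfl⟩ z hz rfl
      exact hpS y (.inl hy) (hrS _ hz)
    · rintro z (⟨y, hy, rfl⟩ | hz) _ ⟨y', hy', rfl⟩
      · exact hmap.2.2 _ (List.mem_map_of_mem hy) _ (List.mem_map_of_mem hy')
      · rintro rfl
        exact hpS y' (.inr hy') (hrS _ hz)

variable {k l : ℕ} {u v : W'} {p q : List W'}

theorem isListPath_append_map {a b : W} {r : List W}
    (hp : IsListPath A' u v (u :: p)) (huv : u ≠ v) (hpS : ∀ y ∈ p, g y ∉ S)
    (hr : IsListPath A a b r) (hrS : ∀ z ∈ r, z ∈ S) (hout : ∀ y ∈ p.head?, A b (g y)) :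
    IsListPath A a (g v) (r ++ p.map g) := by
  obtain ⟨hpc, hpn, -, hpv⟩ := hp
  obtain ⟨hPc, hPn⟩ := hc.isChain_and_nodup_splice hg (p₁ := []) List.isChain_nil hpc.tail
    (by simpa using (List.nodup_cons.1 hpn).2) (by simpa using hpS) hr hrS (by simp) hout
  exact ⟨by simpa using hPc, by simpa using hPn, by simp [hr.2.2.1],
    by simp [List.getLast?_append, List.getLast?_eq_of_cons hpv huv]⟩

theorem isTwoBlockCycle_map (h : IsTwoBlockCycle A' k l u v p q) (hp : ∀ x ∈ p, g x ∉ S)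
    (hq : ∀ x ∈ q, g x ∉ S) : IsTwoBlockCycle A k l (g u) (g v) (p.map g) (q.map g) := by
  refine ⟨h.ne ∘ (hg.injective ·), hc.isListPath_map hg h.left hp,
    hc.isListPath_map hg h.right hq, by simpa using h.length_left, by simpa using h.length_right,
    fun z hzp hzq => ?_⟩
  obtain ⟨y, hy, rfl⟩ := List.mem_map.1 hzq
  rw [List.mem_map_of_injective hg.injective] at hzp
  exact (h.inter y hzp hy).imp (congrArg g) (congrArg g)

theorem exists_isTwoBlockCycle_of_mem (hS : IsStronglyConnectedOn A S)
    (h : IsTwoBlockCycle A' k l u v p q) {x : W'} (hx : x ∈ p) (hxS : g x ∈ S)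
    (hu : g u ∉ S) (hv : g v ∉ S) : ∃ p', IsTwoBlockCycle A k l (g u) (g v) p' (q.map g) := by
  have hq : ∀ y ∈ q, g y ∉ S := fun y hy hyS => by
    obtain rfl := hc.eq_of_section_mem hg hyS hxS
    rcases h.inter y hx hy with rfl | rfl
    exacts [hu hxS, hv hxS]
  obtain ⟨p₁, p₂, rfl⟩ := List.append_of_mem hx
  obtain ⟨hpc, hpn, hpu, hpv⟩ := h.left
  obtain ⟨hxp, hnd⟩ := List.nodup_cons.1 (List.nodup_middle.1 hpn)
  have hpS : ∀ y ∈ p₁ ++ p₂, g y ∉ S := fun y hy hyS =>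
    hxp (hc.eq_of_section_mem hg hyS hxS ▸ hy)
  have hp₁u : p₁.head? = some u := by
    cases hh : p₁.head? <;> simp_all [List.head?_append]
  have hp₂v : p₂.getLast? = some v := by
    cases hh : p₂.getLast? <;> simp_all [List.getLast?_append, List.getLast?_cons]
  obtain ⟨a, ha, hin⟩ := hc.exists_adj_mem_getLast hg
    (List.IsChain.left_of_append (l₂ := p₂) (by simpa using hpc)) hxS
    fun y hy => hpS y (List.mem_append_left _ hy)
  obtain ⟨b, hb, hout⟩ := hc.exists_mem_adj_head hg hpc.right_of_append hxS
    fun y hy => hpS y (List.mem_append_right _ hy)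
  obtain ⟨r, hr, hrS⟩ := hS a ha b hb
  obtain ⟨hPc, hPn⟩ := hc.isChain_and_nodup_splice hg hpc.left_of_append
    hpc.right_of_append.tail hnd hpS hr hrS hin hout
  refine ⟨p₁.map g ++ r ++ p₂.map g, h.ne ∘ (hg.injective ·),
    ⟨hPc, hPn, by simp [List.head?_append, hp₁u], by simp [List.getLast?_append, hp₂v]⟩,
    hc.isListPath_map hg h.right hq, ?_, by simpa using h.length_right, fun z hzP hzQ => ?_⟩
  · have hlen := h.length_left
    simp only [List.length_append, List.length_map, List.length_cons] at hlen ⊢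
    have := List.length_pos_iff.2 hr.ne_nil
    omega
  · obtain ⟨y, hy, rfl⟩ := List.mem_map.1 hzQ
    have hyp : y ∈ p₁ ++ x :: p₂ := by
      simp only [List.mem_append, List.mem_map_of_injective hg.injective] at hzP
      rcases hzP with (hy₁ | hyr) | hy₂
      exacts [by simp [hy₁], absurd (hrS _ hyr) (hq y hy), by simp [hy₂]]
    exact (h.inter y hyp hy).imp (congrArg g) (congrArg g)

theorem exists_isTwoBlockCycle_of_start (hS : IsStronglyConnectedOn A S)
    (h : IsTwoBlockCycle A' k l u v p q) (hu : g u ∈ S) :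
    ∃ w p' q', IsTwoBlockCycle A k l w (g v) p' q' := by
  obtain ⟨p₂, rfl⟩ := List.head?_eq_some_iff.1 h.left.2.2.1
  obtain ⟨q₂, rfl⟩ := List.head?_eq_some_iff.1 h.right.2.2.1
  have hup : u ∉ p₂ := (List.nodup_cons.1 h.left.2.1).1
  have hp₂S : ∀ y ∈ p₂, g y ∉ S := fun y hy hyS =>
    hup (hc.eq_of_section_mem hg hyS hu ▸ hy)
  have hq₂S : ∀ y ∈ q₂, g y ∉ S := fun y hy hyS =>
    (List.nodup_cons.1 h.right.2.1).1 (hc.eq_of_section_mem hg hyS hu ▸ hy)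
  have hvS : g v ∉ S :=
    hp₂S v (List.mem_of_getLast? (List.getLast?_eq_of_cons h.left.2.2.2 h.ne))
  obtain ⟨b, hb, hbp⟩ := hc.exists_mem_adj_head hg h.left.1 hu hp₂S
  obtain ⟨b', hb', hbq⟩ := hc.exists_mem_adj_head hg h.right.1 hu hq₂S
  obtain ⟨r, hr, hrS⟩ := hS b' hb' b hb
  refine ⟨b', r ++ p₂.map g, [b'] ++ q₂.map g, fun hb'v => hvS (hb'v ▸ hb'),
    hc.isListPath_append_map hg h.left h.ne hp₂S hr hrS hbp,
    hc.isListPath_append_map hg h.right h.ne hq₂S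
      ⟨List.isChain_singleton _, List.nodup_singleton _, rfl, rfl⟩ (by simpa using hb') hbq,
    ?_, by simpa using h.length_right, fun z hzP hzQ => ?_⟩
  · have hlen := h.length_left
    simp only [List.length_append, List.length_map, List.length_cons] at hlen ⊢
    have := List.length_pos_iff.2 hr.ne_nil
    omega
  · rcases List.mem_append.1 hzQ with hz | hzQ
    · exact .inl (List.mem_singleton.1 hz)
    obtain ⟨y, hy, rfl⟩ := List.mem_map.1 hzQ
    have hyp : y ∈ p₂ := by
      rcases List.mem_append.1 hzP with hyr | hyp
      exacts [absurd (hrS _ hyr) (hq₂S y hy), (List.mem_map_of_injective hg.injective).1 hyp]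
    rcases h.inter y (List.mem_cons_of_mem u hyp) (List.mem_cons_of_mem u hy) with rfl | rfl
    exacts [absurd hyp hup, .inr rfl]

end IsContractionOf

theorem IsContractionOf.hasTwoBlockCycle {W W' : Type u} {A : W → W → Prop}
    {A' : W' → W' → Prop} {f : W → W'} {S : Set W} {k l : ℕ} (hc : IsContractionOf A' A f S)
    (hS : IsStronglyConnectedOn A S) (h : HasTwoBlockCycle A' k l) : HasTwoBlockCycle A k l := by
  rw [hasTwoBlockCycle_iff] at h ⊢
  obtain ⟨u, v, p, q, h⟩ := h
  obtain ⟨g, hg⟩ : ∃ g, Function.RightInverse g f := ⟨_, Function.rightInverse_surjInv hc.1⟩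
  by_cases hu : g u ∈ S
  · obtain ⟨w, p', q', h'⟩ := hc.exists_isTwoBlockCycle_of_start hg hS h hu
    exact ⟨_, _, _, _, h'⟩
  by_cases hv : g v ∈ S
  · obtain ⟨w, p', q', h'⟩ :=
      hc.reverse.exists_isTwoBlockCycle_of_start hg hS.reverse h.reverse hv
    exact ⟨_, _, _, _, h'.reverse⟩
  by_cases hp : ∃ x ∈ p, g x ∈ S
  · obtain ⟨x, hx, hxS⟩ := hp
    obtain ⟨p', h'⟩ := hc.exists_isTwoBlockCycle_of_mem hg hS h hx hxS hu hv
    exact ⟨_, _, _, _, h'⟩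
  by_cases hq : ∃ x ∈ q, g x ∈ S
  · obtain ⟨x, hx, hxS⟩ := hq
    obtain ⟨q', h'⟩ := hc.exists_isTwoBlockCycle_of_mem hg hS h.swap hx hxS hu hv
    exact ⟨_, _, _, _, h'.swap⟩
  push Not at hp hq
  exact ⟨_, _, _, _, hc.isTwoBlockCycle_map hg h hp hq⟩

theorem contraction_no_twoBlockCycle_general
    (k l m : ℕ)
    (W : ℕ → Type u)
    (A : ∀ i, W i → W i → Prop)
    (hno : ¬ HasTwoBlockCycle (A 0) k l)
    (nc : ℕ → ℕ) (c : ∀ i, Fin (nc i + 1) → W i)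
    (f : ∀ i, W i → W (i + 1))
    (hcyc : ∀ i < m, IsCycle (A i) (nc i) (c i))
    (hcontr : ∀ i < m, IsContractionOf (A (i + 1)) (A i) (f i) (Set.range (c i))) :
    ∀ j ≤ m, ¬ HasTwoBlockCycle (A j) k l := by
  intro j
  induction j with
  | zero => exact fun _ => hno
  | succ i ih =>
    intro hi h
    exact ih (by omega) <|
      (hcontr i hi).hasTwoBlockCycle (hcyc i hi).isStronglyConnectedOn_range h

/-- Proposition 3.2.  With the iterated contraction construction
(`D⁽⁰⁾ = (W 0, A 0)` a strongly connected digraph without `c(k,l)`; for `i < m`,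
`χ(D⁽ⁱ⁾) ≥ 2k − 2`, `C⁽ⁱ⁾` (given by `c i`, of length `nc i + 1`) is a longest
directed cycle of `D⁽ⁱ⁾` and `D⁽ⁱ⁺¹⁾ = D⁽ⁱ⁾ / V(C⁽ⁱ⁾)`; and `χ(D⁽ᵐ⁾) ≤ 2k − 3`):
for every `j ∈ {0, 1, …, m}`, the digraph `D⁽ʲ⁾` contains no two-block cycle
`c(k, l)`. -/
theorem contraction_no_twoBlockCycle
    (k l m : ℕ) (hk : 2 ≤ k) (hl : 1 ≤ l) (hlk : l ≤ k)
    (W : ℕ → Type u) [∀ i, Fintype (W i)]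
    (A : ∀ i, W i → W i → Prop) (hirr : Irreflexive (A 0))
    (hstrong : ∀ u v : W 0, Relation.ReflTransGen (A 0) u v)
    (hno : ¬ HasTwoBlockCycle (A 0) k l)
    (nc : ℕ → ℕ) (c : ∀ i, Fin (nc i + 1) → W i)
    (f : ∀ i, W i → W (i + 1))
    (hchi : ∀ i < m, ((2 * k - 2 : ℕ) : ℕ∞) ≤ (underlying (A i)).chromaticNumber)
    (hcyc : ∀ i < m, IsCycle (A i) (nc i) (c i))
    (hlong : ∀ i < m, ∀ (n' : ℕ) (c' : Fin (n' + 1) → W i),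
      IsCycle (A i) n' c' → n' ≤ nc i)
    (hcontr : ∀ i < m, IsContractionOf (A (i + 1)) (A i) (f i) (Set.range (c i)))
    (hend : (underlying (A m)).chromaticNumber ≤ ((2 * k - 3 : ℕ) : ℕ∞)) :
    ∀ j ≤ m, ¬ HasTwoBlockCycle (A j) k l :=
  contraction_no_twoBlockCycle_general k l m W A hno nc c f hcyc hcontr
end

section
/- With the iterated contraction construction and iterated preimages as in the context: χ(D) ≤ (2k−3) · max over v ∈ V(D^(m)) of χ(D[φ^(m)(v)]), where D[φ^(m)(v)] is the subdigraph of D induced on the vertex set φ^(m)(v). -/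
/-! Every arc of `D` either survives the contractions `D → D⁽ᵐ⁾` or lies inside a single
preimage `φ⁽ᵐ⁾(v)`. Hence colouring `u` by the pair (colour of its image in `D⁽ᵐ⁾`, colour
of `u` inside its preimage) is proper, which gives `χ(D) ≤ χ(D⁽ᵐ⁾) · max_v χ(D[φ⁽ᵐ⁾(v)])`. -/

universe u

namespace SimpleGraph

variable {V V' V'' : Type*} {G : SimpleGraph V} {G' : SimpleGraph V'} {G'' : SimpleGraph V''}

def IsWeakHom (G : SimpleGraph V) (G' : SimpleGraph V') (φ : V → V') : Prop :=
  ∀ ⦃u v⦄, G.Adj u v → φ u = φ v ∨ G'.Adj (φ u) (φ v)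

theorem isWeakHom_id : G.IsWeakHom G id :=
  fun _ _ h => Or.inr h

theorem IsWeakHom.comp {φ : V → V'} {ψ : V' → V''} (hψ : G'.IsWeakHom G'' ψ)
    (hφ : G.IsWeakHom G' φ) : G.IsWeakHom G'' (ψ ∘ φ) := by
  intro u v h
  rcases hφ h with heq | hadj
  · exact Or.inl (congrArg ψ heq)
  · exact hψ hadj

theorem IsWeakHom.colorable_mul {φ : V → V'} (hφ : G.IsWeakHom G' φ) {n M : ℕ}
    (hG' : G'.Colorable n) (hfib : ∀ v, (G.induce (φ ⁻¹' {v})).Colorable M) :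
    G.Colorable (n * M) := by
  obtain ⟨C'⟩ := hG'
  have C := fun v => (hfib v).some
  let fibColor : V → Fin M := fun u => C (φ u) ⟨u, rfl⟩
  have fibColor_eq : ∀ u v (h : φ u = v), fibColor u = C v ⟨u, h⟩ := by
    rintro u _ rfl; rfl
  have coloring : G.Coloring (Fin n × Fin M) := by
    refine Coloring.mk (fun u => (C' (φ u), fibColor u)) fun {u v} hadj hcol => ?_
    by_cases heq : φ u = φ v
    · refine (C (φ v)).valid (show (G.induce (φ ⁻¹' {φ v})).Adj ⟨u, heq⟩ ⟨v, rfl⟩ from hadj) ?_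
      rw [← fibColor_eq u (φ v) heq]
      exact congrArg Prod.snd hcol
    · exact C'.valid ((hφ hadj).resolve_left heq) (congrArg Prod.fst hcol)
  simpa using coloring.colorable

theorem IsWeakHom.chromaticNumber_le_mul_iSup [Finite V] [Finite V'] {φ : V → V'}
    (hφ : G.IsWeakHom G' φ) :
    G.chromaticNumber ≤ G'.chromaticNumber * ⨆ v, (G.induce (φ ⁻¹' {v})).chromaticNumber := by
  have : Fintype V := Fintype.ofFinite V
  have : Fintype V' := Fintype.ofFinite V'
  have hG' : G'.chromaticNumber ≠ ⊤ :=
    chromaticNumber_ne_top_iff_exists.mpr ⟨_, G'.colorable_of_fintype⟩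
  have hsup : (⨆ v, (G.induce (φ ⁻¹' {v})).chromaticNumber) ≠ ⊤ :=
    ne_top_of_le_ne_top (ENat.natCast_ne_top (Fintype.card V)) <| iSup_le fun _ =>
      (chromaticNumber_mono_of_hom (Embedding.induce _).toHom).trans chromaticNumber_le_card
  rw [← ENat.natCast_toNat hG', ← ENat.natCast_toNat hsup, ← Nat.cast_mul]
  refine (hφ.colorable_mul (colorable_of_chromaticNumber_ne_top hG') fun v => ?_).chromaticNumber_le
  exact chromaticNumber_le_iff_colorable.mp ((le_iSup _ v).trans (ENat.natCast_toNat hsup).ge)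

theorem isWeakHom_of_chain {W : ℕ → Type*} {G : ∀ i, SimpleGraph (W i)}
    {f : ∀ i, W i → W (i + 1)} {g : ∀ i, W 0 → W i} {m : ℕ}
    (hf : ∀ i < m, (G i).IsWeakHom (G (i + 1)) (f i)) (hg0 : ∀ u, g 0 u = u)
    (hgs : ∀ i < m, ∀ u, g (i + 1) u = f i (g i u)) :
    ∀ i ≤ m, (G 0).IsWeakHom (G i) (g i) := by
  intro i
  induction i with
  | zero =>
    intro _
    rw [show g 0 = id from funext hg0]
    exact isWeakHom_id
  | succ i ih =>
    intro hi
    rw [show g (i + 1) = f i ∘ g i from funext (hgs i hi)]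
    exact (hf i hi).comp (ih (Nat.le_of_succ_le hi))

end SimpleGraph

theorem IsContractionOf.isWeakHom {W W' : Type u} {A' : W' → W' → Prop} {A : W → W → Prop}
    {f : W → W'} {S : Set W} (hf : IsContractionOf A' A f S) :
    (underlying A).IsWeakHom (underlying A') f := by
  rintro a b ⟨-, harc⟩
  by_cases h : f a = f b
  · exact Or.inl h
  · refine Or.inr ⟨h, ?_⟩
    rcases harc with hab | hba
    · exact Or.inl ((hf.2.2.2 _ _).mpr ⟨h, a, b, rfl, rfl, hab⟩)
    · exact Or.inr ((hf.2.2.2 _ _).mpr ⟨Ne.symm h, b, a, rfl, rfl, hba⟩)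

/-- Iterated preimages are encoded by `g i : W 0 → W i` (`g 0 = id`, `g (i+1) = f i ∘ g i`),
so that `φ⁽ᵐ⁾(v) = g m ⁻¹' {v}`. -/
theorem chromatic_le_contraction_bound_general
    (k m : ℕ)
    (W : ℕ → Type u) [∀ i, Fintype (W i)]
    (A : ∀ i, W i → W i → Prop)
    (nc : ℕ → ℕ) (c : ∀ i, Fin (nc i + 1) → W i)
    (f : ∀ i, W i → W (i + 1))
    (hcontr : ∀ i < m, IsContractionOf (A (i + 1)) (A i) (f i) (Set.range (c i)))
    (hend : (underlying (A m)).chromaticNumber ≤ ((2 * k - 3 : ℕ) : ℕ∞))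
    (g : ∀ i, W 0 → W i) (hg0 : ∀ u : W 0, g 0 u = u)
    (hgs : ∀ i < m, ∀ u : W 0, g (i + 1) u = f i (g i u)) :
    (underlying (A 0)).chromaticNumber ≤
      ((2 * k - 3 : ℕ) : ℕ∞) *
        ⨆ v : W m, ((underlying (A 0)).induce (g m ⁻¹' {v})).chromaticNumber := by
  have hg : (underlying (A 0)).IsWeakHom (underlying (A m)) (g m) :=
    SimpleGraph.isWeakHom_of_chain (fun i hi => (hcontr i hi).isWeakHom) hg0 hgs m le_rfl
  calc (underlying (A 0)).chromaticNumber
      ≤ (underlying (A m)).chromaticNumber *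
          ⨆ v : W m, ((underlying (A 0)).induce (g m ⁻¹' {v})).chromaticNumber :=
        hg.chromaticNumber_le_mul_iSup
    _ ≤ _ := by gcongr

/-- Lemma 3.3.  With the iterated contraction construction, and iterated preimage
maps encoded by `g : ∀ i, W 0 → W i` (`g 0 = id`, `g (i+1) = f i ∘ g i`), so that
for `v ∈ V(D⁽ᵐ⁾)` the set `φ⁽ᵐ⁾(v) ⊆ V(D)` is `g m ⁻¹' {v}`:
`χ(D) ≤ (2k − 3) · max_{v ∈ V(D⁽ᵐ⁾)} χ(D[φ⁽ᵐ⁾(v)])`. -/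
theorem chromatic_le_contraction_bound
    (k l m : ℕ) (hk : 2 ≤ k) (hl : 1 ≤ l) (hlk : l ≤ k)
    (W : ℕ → Type u) [∀ i, Fintype (W i)]
    (A : ∀ i, W i → W i → Prop) (hirr : Irreflexive (A 0))
    (hstrong : ∀ u v : W 0, Relation.ReflTransGen (A 0) u v)
    (hno : ¬ HasTwoBlockCycle (A 0) k l)
    (nc : ℕ → ℕ) (c : ∀ i, Fin (nc i + 1) → W i)
    (f : ∀ i, W i → W (i + 1))
    (hchi : ∀ i < m, ((2 * k - 2 : ℕ) : ℕ∞) ≤ (underlying (A i)).chromaticNumber)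
    (hcyc : ∀ i < m, IsCycle (A i) (nc i) (c i))
    (hlong : ∀ i < m, ∀ (n' : ℕ) (c' : Fin (n' + 1) → W i),
      IsCycle (A i) n' c' → n' ≤ nc i)
    (hcontr : ∀ i < m, IsContractionOf (A (i + 1)) (A i) (f i) (Set.range (c i)))
    (hend : (underlying (A m)).chromaticNumber ≤ ((2 * k - 3 : ℕ) : ℕ∞))
    (g : ∀ i, W 0 → W i) (hg0 : ∀ u : W 0, g 0 u = u)
    (hgs : ∀ i < m, ∀ u : W 0, g (i + 1) u = f i (g i u)) :
    (underlying (A 0)).chromaticNumber ≤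
      ((2 * k - 3 : ℕ) : ℕ∞) *
        ⨆ v : W m, ((underlying (A 0)).induce (g m ⁻¹' {v})).chromaticNumber :=
  chromatic_le_contraction_bound_general k m W A nc c f hcontr hend g hg0 hgs
end

section
/- Let k ≥ ℓ ≥ 1 be integers with k ≥ 2, let D be a digraph containing no cycle with two blocks c(k,ℓ), and let C be a longest directed cycle of D, with |C| ≥ 2k−2. Then for any two distinct vertices x and y of C, D contains no directed path from y to x of length at least 2k−2 all of whose internal vertices lie outside V(C). -/
/-!
Write `x = c a` and `y = c b`. The external path `P` from `y` to `x` followed by the arc of `C`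
from `x` to `y` is a directed cycle, so, `C` being longest, `P` is no longer than the arc of `C`
from `y` to `x`. That arc and `P` are two internally disjoint paths from `y` to `x`, of lengths
at least `|P| ≥ 2k - 2 ≥ k ≥ ℓ`: a cycle with two blocks `c(k, ℓ)`.
-/

universe u

open Fin.NatCast Fin.CommRing

theorem Fin.val_sub_add_val_sub_of_ne_s15 {n : ℕ} {a b : Fin (n + 1)} (hab : a ≠ b) :
    (b - a).val + (a - b).val = n + 1 := by
  have hba : b - a ≠ 0 := sub_ne_zero.mpr hab.symm
  rw [← neg_sub b a, Fin.val_neg, if_neg hba]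
  have := (b - a).isLt
  omega

variable {V : Type u} {A : V → V → Prop}

section CloseUp

variable {N m : ℕ} {p : Fin (N + 1) → V} {q : Fin (m + 2) → V}

/-- The cyclic sequence `p 0, …, p N, q 1, …, q m`: for `q` a path from `p N` to `p 0`, the
closed walk along `p` and back along `q`. -/
def closeUp (p : Fin (N + 1) → V) (q : Fin (m + 2) → V) : Fin (N + m + 1) → V :=
  fun i => if h : i.val ≤ N then p ⟨i, Nat.lt_succ_of_le h⟩ else q ⟨i - N, by omega⟩

theorem closeUp_of_le {i : Fin (N + m + 1)} (hi : i.val ≤ N) :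
    closeUp p q i = p ⟨i, Nat.lt_succ_of_le hi⟩ :=
  dif_pos hi

theorem closeUp_of_ge (hq0 : q 0 = p (Fin.last N)) {i : Fin (N + m + 1)} (hi : N ≤ i.val) :
    closeUp p q i = q ⟨i - N, by omega⟩ := by
  unfold closeUp
  split_ifs with h
  · have hiN : i.val = N := le_antisymm h hi
    simp only [hiN, Nat.sub_self]
    exact (hq0.trans (congrArg p (Fin.ext rfl))).symm
  · rfl

theorem closeUp_injective (hp : Function.Injective p) (hq : Function.Injective q)
    (hdisj : ∀ i j, p i = q j → j = 0 ∨ j = Fin.last (m + 1)) :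
    Function.Injective (closeUp p q) := by
  have hmixed : ∀ i j : Fin (N + m + 1), i.val ≤ N → ¬ j.val ≤ N →
      closeUp p q i ≠ closeUp p q j := by
    intro i j hi hj h
    rw [closeUp, closeUp, dif_pos hi, dif_neg hj] at h
    have := j.isLt
    rcases hdisj _ _ h with h0 | hlast
    · have := congrArg Fin.val h0
      simp only [Fin.val_zero] at this
      omega
    · have := congrArg Fin.val hlast
      simp only [Fin.val_last] at this
      omega
  intro i j h
  by_cases hi : i.val ≤ N <;> by_cases hj : j.val ≤ N
  · rw [closeUp, closeUp, dif_pos hi, dif_pos hj] at h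
    exact Fin.ext (Fin.mk.inj (hp h))
  · exact absurd h (hmixed i j hi hj)
  · exact absurd h.symm (hmixed j i hj hi)
  · rw [closeUp, closeUp, dif_neg hi, dif_neg hj] at h
    have := Fin.ext_iff.mp (hq h)
    exact Fin.ext (by simp only at this; omega)

theorem closeUp_arc (hp : ∀ i : Fin N, A (p i.castSucc) (p i.succ))
    (hq : ∀ j : Fin (m + 1), A (q j.castSucc) (q j.succ))
    (hq0 : q 0 = p (Fin.last N)) (hql : q (Fin.last (m + 1)) = p 0) (i : Fin (N + m + 1)) :
    A (closeUp p q i) (closeUp p q (i + 1)) := by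
  by_cases hi : i = Fin.last (N + m)
  · rw [hi, Fin.last_add_one, closeUp_of_ge hq0 (by simp), closeUp_of_le (by simp)]
    convert hq (Fin.last m) using 2
    · exact Fin.ext (by simp)
    · exact hql.symm.trans (congrArg q (Fin.ext (by simp)))
  have hsucc : (i + 1).val = i.val + 1 := Fin.val_add_one_of_lt (Fin.lt_last_iff_ne_last.mpr hi)
  have hlt : i.val < N + m := by
    have := Fin.val_lt_last hi
    simpa using this
  by_cases hiN : i.val < N
  · rw [closeUp_of_le hiN.le, closeUp_of_le (by omega)]
    convert hp ⟨i, hiN⟩ using 2 <;>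
      exact Fin.ext (by simp only [Fin.val_succ, Fin.val_castSucc] <;> omega)
  · rw [closeUp_of_ge hq0 (by omega), closeUp_of_ge hq0 (by omega)]
    convert hq ⟨i - N, by omega⟩ using 2 <;>
      exact Fin.ext (by simp only [Fin.val_succ, Fin.val_castSucc] <;> omega)

theorem isCycle_closeUp (hp : IsDipath A p) (hq : IsDipath A q)
    (hq0 : q 0 = p (Fin.last N)) (hql : q (Fin.last (m + 1)) = p 0)
    (hdisj : ∀ i j, p i = q j → j = 0 ∨ j = Fin.last (m + 1)) (hNm : 1 ≤ N + m) :
    IsCycle A (N + m) (closeUp p q) :=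
  ⟨hNm, closeUp_injective hp.1 hq.1 hdisj, closeUp_arc hp.2 hq.2 hq0 hql⟩

end CloseUp

section CycleArc

variable {n : ℕ} {c : Fin (n + 1) → V}

def cycleArc (c : Fin (n + 1) → V) (a : Fin (n + 1)) (m : ℕ) : Fin (m + 1) → V :=
  fun j => c (a + (j.val : Fin (n + 1)))

@[simp]
theorem cycleArc_zero (a : Fin (n + 1)) (m : ℕ) : cycleArc c a m 0 = c a := by
  simp [cycleArc]

@[simp]
theorem cycleArc_last_val_sub (a b : Fin (n + 1)) :
    cycleArc c a (b - a).val (Fin.last _) = c b := by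
  simp [cycleArc]

theorem IsCycle.isDipath_cycleArc (hc : IsCycle A n c) (a : Fin (n + 1)) {m : ℕ} (hm : m ≤ n) :
    IsDipath A (cycleArc c a m) := by
  refine ⟨fun i j h => Fin.ext ?_, fun j => ?_⟩
  · have hij := congrArg Fin.val (add_left_cancel (hc.2.1 h))
    rwa [Fin.val_natCast, Fin.val_natCast, Nat.mod_eq_of_lt (by omega),
      Nat.mod_eq_of_lt (by omega)] at hij
  · have hstep : a + (j.succ.val : Fin (n + 1)) = a + (j.castSucc.val : Fin (n + 1)) + 1 := by
      simp only [Fin.val_succ, Fin.val_castSucc, Nat.cast_succ]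
      ring
    simpa only [cycleArc, hstep] using hc.2.2 _

end CycleArc

section ExternalPath

variable {n : ℕ} {c : Fin (n + 1) → V} {a b : Fin (n + 1)} {N : ℕ} {p : Fin (N + 1) → V}

theorem eq_zero_or_eq_last_of_apply_mem_range
    (hint : ∀ i : Fin (N + 1), i ≠ 0 → i ≠ Fin.last N → p i ∉ Set.range c)
    {i : Fin (N + 1)} (hi : p i ∈ Set.range c) : i = 0 ∨ i = Fin.last N := by
  by_contra! h
  exact hint i h.1 h.2 hi

/-- The path followed by the arc of `c` from `a` to `b` is a cycle. -/
theorem IsCycle.add_val_sub_le_of_longest (hc : IsCycle A n c)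
    (hlong : ∀ (n' : ℕ) (c' : Fin (n' + 1) → V), IsCycle A n' c' → n' ≤ n) (hab : a ≠ b)
    (hp : IsDipath A p) (hp0 : p 0 = c b) (hpl : p (Fin.last N) = c a)
    (hint : ∀ i : Fin (N + 1), i ≠ 0 → i ≠ Fin.last N → p i ∉ Set.range c) :
    N + (b - a).val ≤ n + 1 := by
  obtain ⟨m, hm⟩ : ∃ m, (b - a).val = m + 1 :=
    Nat.exists_eq_succ_of_ne_zero (Fin.val_ne_zero_iff.mpr (sub_ne_zero.mpr hab.symm))
  have hdn := (b - a).isLt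
  set q := cycleArc c a (m + 1)
  have hq : IsDipath A q := hc.isDipath_cycleArc a (by omega)
  have hq0 : q 0 = p (Fin.last N) := by simp only [q, cycleArc_zero, hpl]
  have hql : q (Fin.last (m + 1)) = p 0 := by
    simp only [q, cycleArc, Fin.val_last, ← hm, Fin.cast_val_eq_self, add_sub_cancel, hp0]
  have hdisj : ∀ i j, p i = q j → j = 0 ∨ j = Fin.last (m + 1) := by
    intro i j h
    rcases eq_zero_or_eq_last_of_apply_mem_range hint ⟨_, h.symm⟩ with rfl | rfl
    · exact Or.inr (hq.1 (h.symm.trans hql.symm))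
    · exact Or.inl (hq.1 (h.symm.trans hq0.symm))
  have hN : N ≠ 0 := by
    rintro rfl
    exact hab (hc.2.1 (hpl.symm.trans hp0))
  have := hlong _ _ (isCycle_closeUp hp hq hq0 hql hdisj (by omega))
  omega

theorem IsCycle.hasTwoBlockCycle_of_external_path {k l : ℕ} (hc : IsCycle A n c) (hab : a ≠ b)
    (hp : IsDipath A p) (hp0 : p 0 = c b) (hpl : p (Fin.last N) = c a)
    (hint : ∀ i : Fin (N + 1), i ≠ 0 → i ≠ Fin.last N → p i ∉ Set.range c)
    (hkN : k ≤ N) (hl : l ≤ (a - b).val) : HasTwoBlockCycle A k l := by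
  set q := cycleArc c b (a - b).val
  have hq : IsDipath A q := hc.isDipath_cycleArc b (Nat.lt_succ_iff.mp (a - b).isLt)
  have hq0 : q 0 = p 0 := by simp only [q, cycleArc_zero, hp0]
  have hql : q (Fin.last _) = p (Fin.last N) := by simp only [q, cycleArc_last_val_sub, hpl]
  refine ⟨N, _, p, q, hkN, hl, hp, hq, hq0.symm, hql.symm, ?_, fun i j h => ?_⟩
  · rw [hp0, hpl]
    exact hc.2.1.ne hab.symm
  rcases eq_zero_or_eq_last_of_apply_mem_range hint ⟨_, h.symm⟩ with rfl | rfl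
  · exact Or.inl ⟨rfl, hq.1 (h.symm.trans hq0.symm)⟩
  · exact Or.inr ⟨rfl, hq.1 (h.symm.trans hql.symm)⟩

end ExternalPath

theorem no_long_external_path_general {V : Type u}
    (k l : ℕ) (hk : 2 ≤ k) (hlk : l ≤ k)
    (A : V → V → Prop)
    (hno : ¬ HasTwoBlockCycle A k l)
    (n : ℕ) (c : Fin (n + 1) → V) (hcyc : IsCycle A n c)
    (hlong : ∀ (n' : ℕ) (c' : Fin (n' + 1) → V), IsCycle A n' c' → n' ≤ n)
    (x y : V) (hx : x ∈ Set.range c) (hy : y ∈ Set.range c) (hxy : x ≠ y)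
    (N : ℕ) (hN : 2 * k - 2 ≤ N) (p : Fin (N + 1) → V)
    (hp : IsDipath A p) (hp0 : p 0 = y) (hpl : p (Fin.last N) = x)
    (hint : ∀ i : Fin (N + 1), i ≠ 0 → i ≠ Fin.last N → p i ∉ Set.range c) :
    False := by
  obtain ⟨a, rfl⟩ := hx
  obtain ⟨b, rfl⟩ := hy
  have hab : a ≠ b := fun h => hxy (congrArg c h)
  have hshort := hcyc.add_val_sub_le_of_longest hlong hab hp hp0 hpl hint
  have hsum := Fin.val_sub_add_val_sub_of_ne_s15 hab
  exact hno (hcyc.hasTwoBlockCycle_of_external_path hab hp hp0 hpl hint (by omega) (by omega))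

/-- Let `k ≥ l ≥ 1` with `k ≥ 2`, let `D` be a digraph containing no two-block
cycle `c(k, l)`, and let `C` (given by `c`, of length `n + 1 ≥ 2k − 2`) be a
longest directed cycle of `D`.  Then for any two distinct vertices `x, y` of `C`,
`D` contains no directed path from `y` to `x` of length at least `2k − 2` all of
whose internal vertices lie outside `V(C)`. -/
theorem no_long_external_path {V : Type u}
    (k l : ℕ) (hk : 2 ≤ k) (hl : 1 ≤ l) (hlk : l ≤ k)
    (A : V → V → Prop) (hirr : Irreflexive A)
    (hno : ¬ HasTwoBlockCycle A k l)
    (n : ℕ) (c : Fin (n + 1) → V) (hcyc : IsCycle A n c)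
    (hlong : ∀ (n' : ℕ) (c' : Fin (n' + 1) → V), IsCycle A n' c' → n' ≤ n)
    (hlen : 2 * k - 2 ≤ n + 1)
    (x y : V) (hx : x ∈ Set.range c) (hy : y ∈ Set.range c) (hxy : x ≠ y)
    (N : ℕ) (hN : 2 * k - 2 ≤ N) (p : Fin (N + 1) → V)
    (hp : IsDipath A p) (hp0 : p 0 = y) (hpl : p (Fin.last N) = x)
    (hint : ∀ i : Fin (N + 1), i ≠ 0 → i ≠ Fin.last N → p i ∉ Set.range c) :
    False :=
  no_long_external_path_general k l hk hlk A hno n c hcyc hlong x y hx hy hxy N hN p hp hp0 hpl hint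
end

section
/- Let T be a cycle-tree and let C and C' be two distinct directed cycles of T. Then there exists a unique cycle-path contained in T whose end-cycles are C and C'; that is, there is a unique sequence C = C₀, C₁, ..., C_m = C' of cycles of T such that |V(C_i) ∩ V(C_j)| ≤ 1 for all distinct i, j ∈ {0, 1, ..., m}, with equality if and only if |i−j| = 1. -/
/-!
The vertices and the cycles of `T` form a bipartite incidence graph. The cycle-tree ordering makes
it acyclic, since each cycle meets the earlier ones in a single attachment vertex, and these
attachment vertices connect all the cycles. Cycle-paths from `C` to `C'` correspond exactly to
paths from `C` to `C'` in this graph, with the common vertices of consecutive cycles in between: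
a common vertex of two non-consecutive cycles on such a path would give a second path. Paths in an
acyclic graph are unique, hence so are cycle-paths.
-/

universe u

/-- The arc set of the directed cycle `c 0, c 1, …, c n, c 0`. -/
def CycleArcs {V : Type u} {n : ℕ} (c : Fin (n + 1) → V) : Set (V × V) :=
  {e | ∃ i : Fin (n + 1), e = (c i, c (i + 1))}

/-- `s` is the arc set of some directed cycle of the digraph `A`.
(We identify a directed cycle with its set of arcs, so that cycles differing only
by a rotation of the starting point are identified.) -/
def IsCycleSet {V : Type u} (A : V → V → Prop) (s : Set (V × V)) : Prop :=
  ∃ (n : ℕ) (c : Fin (n + 1) → V), IsCycle A n c ∧ s = CycleArcs c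

/-- The vertex set of a directed cycle given by its arc set. -/
def cycleVerts {V : Type u} (s : Set (V × V)) : Set V := Prod.fst '' s

/-- A digraph `A` is a cycle-tree: it is strongly connected and there is an
ordering `C 0, C 1, …, C (m-1)` of all of its directed cycles such that for each
`i ≥ 1`, the vertex set of `C i` meets the union of the vertex sets of the
previous cycles in exactly one vertex. -/
def IsCycleTree {V : Type u} (A : V → V → Prop) : Prop :=
  (∀ u v : V, Relation.ReflTransGen A u v) ∧
  ∃ (m : ℕ) (C : Fin m → Set (V × V)),
    Function.Injective C ∧
    (∀ i : Fin m, IsCycleSet A (C i)) ∧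
    (∀ s : Set (V × V), IsCycleSet A s → ∃ i : Fin m, C i = s) ∧
    ∀ i : Fin m, 0 < (i : ℕ) →
      ∃ x : V, cycleVerts (C i) ∩
        (⋃ (j : Fin m) (_ : (j : ℕ) < (i : ℕ)), cycleVerts (C j)) = {x}

/-- `L` is a cycle-path sequence in the digraph `A`: a sequence `C₀, C₁, …, C_m`
of directed cycles of `A` (identified with their arc sets) such that
`|V(C_i) ∩ V(C_j)| ≤ 1` for all distinct `i, j`, with equality iff `|i − j| = 1`. -/
def IsCyclePathSeq {V : Type u} (A : V → V → Prop) (L : List (Set (V × V))) : Prop :=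
  (∀ s ∈ L, IsCycleSet A s) ∧
  ∀ (i j : ℕ) (hi : i < L.length) (hj : j < L.length), i ≠ j →
    (cycleVerts (L.get ⟨i, hi⟩) ∩ cycleVerts (L.get ⟨j, hj⟩)).ncard ≤ 1 ∧
    ((cycleVerts (L.get ⟨i, hi⟩) ∩ cycleVerts (L.get ⟨j, hj⟩)).ncard = 1 ↔
      (i = j + 1 ∨ j = i + 1))

open Sum

namespace SimpleGraph

variable {W : Type*} {G : SimpleGraph W}

theorem isAcyclic_of_rank (r : W → ℕ) (hne : ∀ ⦃u v⦄, G.Adj u v → r u ≠ r v)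
    (hlow : ∀ ⦃u v w⦄, G.Adj u v → G.Adj u w → r v < r u → r w < r u → v = w) :
    G.IsAcyclic := by
  classical
  intro u c hc
  obtain ⟨x, hx, hmax⟩ := c.support.toFinset.exists_max_image r ⟨u, by simp⟩
  rw [List.mem_toFinset] at hx
  have hlt : ∀ y, c.toSubgraph.Adj x y → r y < r x := fun y hy =>
    (hmax y (List.mem_toFinset.2 (c.mem_verts_toSubgraph.1 hy.snd_mem))).lt_of_ne
      (hne hy.adj_sub).symm
  obtain ⟨y, z, hyz, hnbr⟩ := Set.ncard_eq_two.1 (hc.ncard_neighborSet_toSubgraph_eq_two hx)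
  have hy : c.toSubgraph.Adj x y := show y ∈ c.toSubgraph.neighborSet x by simp [hnbr]
  have hz : c.toSubgraph.Adj x z := show z ∈ c.toSubgraph.neighborSet x by simp [hnbr]
  exact hyz (hlow hy.adj_sub hz.adj_sub (hlt y hy) (hlt z hz))

theorem IsAcyclic.eq_getVert_two_of_adj_of_adj (hG : G.IsAcyclic) {u v w x : W}
    {p : G.Walk u v} (hp : p.IsPath) (hx : x ∈ p.support) (hux : u ≠ x) (huw : G.Adj u w)
    (hwx : G.Adj w x) : x = p.getVert 2 := by
  classical
  have hq : (Walk.cons huw (Walk.cons hwx Walk.nil)).IsPath := by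
    simp [Walk.cons_isPath_iff, huw.ne, hwx.ne, hux]
  have := (hG.subsingleton_path u x).elim ⟨_, hp.takeUntil hx⟩ ⟨_, hq⟩
  rw [← p.getVert_length_takeUntil hx, congrArg (fun q : G.Path u x => q.1.length) this]
  rfl

def Walk.rightSupport {α β : Type*} {G : SimpleGraph (α ⊕ β)} {x y : α ⊕ β}
    (p : G.Walk x y) : List β :=
  p.support.filterMap Sum.getRight?

theorem Walk.mem_rightSupport {α β : Type*} {G : SimpleGraph (α ⊕ β)} {x y : α ⊕ β}
    {p : G.Walk x y} {i : β} : i ∈ p.rightSupport ↔ inr i ∈ p.support := by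
  simp [rightSupport]

end SimpleGraph

open SimpleGraph

section SetFamily

variable {V ι : Type*} (S : ι → Set V)

def incidenceGraph : SimpleGraph (V ⊕ ι) where
  Adj
    | inl v, inr i => v ∈ S i
    | inr i, inl v => v ∈ S i
    | _, _ => False
  symm := ⟨by rintro (v | i) (w | j) h <;> exact h⟩
  loopless := ⟨by rintro (v | i) h <;> exact h⟩

def IsSetPath (l : List ι) : Prop :=
  l.Nodup ∧ ∀ (i j : ℕ) (hi : i < l.length) (hj : j < l.length), i ≠ j →
    ((S l[i] ∩ S l[j]).Nonempty ↔ i = j + 1 ∨ j = i + 1)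

variable {S}

@[simp]
theorem incidenceGraph_adj_inl_inr {v : V} {i : ι} :
    (incidenceGraph S).Adj (inl v) (inr i) ↔ v ∈ S i := Iff.rfl

@[simp]
theorem incidenceGraph_adj_inr_inl {v : V} {i : ι} :
    (incidenceGraph S).Adj (inr i) (inl v) ↔ v ∈ S i := Iff.rfl

@[simp]
theorem incidenceGraph_not_adj_inl_inl {v w : V} : ¬(incidenceGraph S).Adj (inl v) (inl w) :=
  id

@[simp]
theorem incidenceGraph_not_adj_inr_inr {i j : ι} : ¬(incidenceGraph S).Adj (inr i) (inr j) :=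
  id

theorem isSetPath_singleton {a : ι} : IsSetPath S [a] :=
  ⟨List.nodup_singleton a, fun i j hi hj hij => by
    simp only [List.length_singleton, Nat.lt_one_iff] at hi hj
    omega⟩

theorem isSetPath_cons_cons {a b : ι} {l : List ι} :
    IsSetPath S (a :: b :: l) ↔ IsSetPath S (b :: l) ∧ a ∉ b :: l ∧ (S a ∩ S b).Nonempty ∧
      ∀ x ∈ l, Disjoint (S a) (S x) := by
  constructor
  · rintro ⟨hnd, h⟩
    refine ⟨⟨hnd.of_cons, fun i j hi hj hij => ?_⟩, (List.nodup_cons.1 hnd).1,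
      (h 0 1 (by simp) (by simp) (by simp)).2 (by simp), fun x hx => ?_⟩
    · have := h (i + 1) (j + 1) (by simpa using hi) (by simpa using hj) (by simpa using hij)
      simp only [List.getElem_cons_succ, Nat.add_right_cancel_iff] at this
      exact this
    · obtain ⟨k, hk, rfl⟩ := List.getElem_of_mem hx
      have := h 0 (k + 1 + 1) (by simp) (by simpa) (by simp)
      simp only [List.getElem_cons_succ, List.getElem_cons_zero] at this
      rw [Set.disjoint_iff_inter_eq_empty, ← Set.not_nonempty_iff_eq_empty]
      simpa using this
  · rintro ⟨⟨hnd, h⟩, ha, hab, hdisj⟩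
    have h0 : ∀ j (hj : j < (a :: b :: l).length), j ≠ 0 →
        ((S a ∩ S (a :: b :: l)[j]).Nonempty ↔ j = 1) := by
      rintro (_ | _ | k) hj hj0
      · contradiction
      · simpa using hab
      · simpa [← Set.disjoint_iff_inter_eq_empty, Set.not_nonempty_iff_eq_empty] using
          hdisj _ (List.getElem_mem _)
    refine ⟨List.nodup_cons.2 ⟨ha, hnd⟩, ?_⟩
    rintro (_ | i) (_ | j) hi hj hij
    · contradiction
    · simpa [eq_comm] using h0 (j + 1) hj (by simp)
    · simpa [Set.inter_comm] using h0 (i + 1) hi (by simp)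
    · simpa using h i j (by simpa using hi) (by simpa using hj) (by simpa using hij)

/-- The last conjunct keeps the induction going: it shows that the point joining the first two
sets is not already on the path. -/
theorem exists_isPath_rightSupport_eq {l : List ι} (hl : IsSetPath S l) {a b : ι}
    (ha : l.head? = some a) (hb : l.getLast? = some b) :
    ∃ p : (incidenceGraph S).Walk (inr a) (inr b), p.IsPath ∧ p.rightSupport = l ∧
      ∀ v, inl v ∈ p.support → ∃ i ∈ l.tail, v ∈ S i := by
  induction l generalizing a with
  | nil => simp at ha
  | cons c l ih =>
    obtain rfl : c = a := by simpa using ha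
    cases l with
    | nil =>
      obtain rfl : c = b := by simpa using hb
      exact ⟨.nil, .nil, rfl, by simp⟩
    | cons d l =>
      obtain ⟨hdl, hcd, ⟨v, hvc, hvd⟩, hdisj⟩ := isSetPath_cons_cons.1 hl
      obtain ⟨q, hq, hql, hqv⟩ := ih hdl rfl (by simpa using hb)
      refine ⟨.cons (incidenceGraph_adj_inr_inl.2 hvc) (.cons (incidenceGraph_adj_inl_inr.2 hvd) q),
        ?_, ?_, ?_⟩
      · refine (Walk.cons_isPath_iff _ _).2 ⟨(Walk.cons_isPath_iff _ _).2 ⟨hq, fun hv => ?_⟩, ?_⟩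
        · obtain ⟨i, hi, hvi⟩ := hqv v hv
          exact Set.disjoint_left.1 (hdisj i hi) hvc hvi
        · simpa [← Walk.mem_rightSupport, hql] using hcd
      · simp [Walk.rightSupport, ← hql, List.filterMap_cons]
      · simp only [Walk.support_cons, List.mem_cons, inl.injEq, reduceCtorEq, false_or]
        rintro u (rfl | hu)
        · exact ⟨d, by simp, hvd⟩
        · obtain ⟨i, hi, hui⟩ := hqv u hu
          exact ⟨i, by simp_all, hui⟩

theorem isSetPath_rightSupport (hG : (incidenceGraph S).IsAcyclic) :
    ∀ {a b : ι} {p : (incidenceGraph S).Walk (inr a) (inr b)}, p.IsPath →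
      IsSetPath S p.rightSupport ∧ p.rightSupport.head? = some a ∧
        p.rightSupport.getLast? = some b
  | _, _, .nil, _ => ⟨isSetPath_singleton, rfl, rfl⟩
  | _, _, .cons (v := inr _) h _, _ => absurd h incidenceGraph_not_adj_inr_inr
  | _, _, .cons (v := inl _) _ (.cons (v := inl _) h _), _ =>
    absurd h incidenceGraph_not_adj_inl_inl
  | a, b, .cons (v := inl v) hv (.cons (v := inr a') ha' q), hp => by
    obtain ⟨⟨hq, -⟩, ha⟩ := (Walk.cons_isPath_iff _ _).1 hp |>.imp_left (Walk.cons_isPath_iff _ _).1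
    obtain ⟨hql, hqa, hqb⟩ := isSetPath_rightSupport hG hq
    obtain ⟨l, hl⟩ := List.head?_eq_some_iff.1 hqa
    have hsupp : (Walk.cons hv (Walk.cons ha' q)).rightSupport = a :: a' :: l := by
      simp [Walk.rightSupport, List.filterMap_cons, ← hl]
    rw [hl] at hql hqb
    have ha'l : a ∉ a' :: l := fun h => ha (by simp [← Walk.mem_rightSupport, hl, h])
    refine hsupp ▸ ⟨isSetPath_cons_cons.2 ⟨hql, ha'l, ⟨v, hv, ha'⟩, fun x hx => ?_⟩, rfl,
      by simpa using hqb⟩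
    -- A common point `w` of `a` and `x` would make `a, w, x` the path from `a` to `x`.
    refine Set.disjoint_left.2 fun w hwa hwx => (List.nodup_cons.1 hql.1).1 ?_
    have hxq : inr x ∈ q.support := Walk.mem_rightSupport.1 (hl ▸ List.mem_cons_of_mem a' hx)
    have hxa' := hG.eq_getVert_two_of_adj_of_adj hp (by simp [hxq])
      (fun h => ha'l (by simp_all)) (incidenceGraph_adj_inr_inl.2 hwa)
      (incidenceGraph_adj_inl_inr.2 hwx)
    simp only [Walk.getVert_cons_succ, Walk.getVert_zero, inr.injEq] at hxa'
    exact hxa' ▸ hx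

end SetFamily

section OrderedFamily

variable {V : Type*} {m : ℕ}

def unionBefore (S : Fin m → Set V) (i : Fin m) : Set V :=
  ⋃ (j : Fin m) (_ : (j : ℕ) < i), S j

variable {S : Fin m → Set V}

/-- A set `S i` is ranked `2 i` and a point `2 k + 1`, with `k` the first index of a set
containing it; then the lower neighbours of a point are just `S k`, and those of `S i` lie in
`S i ∩ unionBefore S i`. -/
theorem incidenceGraph_isAcyclic (hS : ∀ i, (S i ∩ unionBefore S i).Subsingleton) :
    (incidenceGraph S).IsAcyclic := by
  let first : V → ℕ := fun v => sInf (Fin.val '' {i | v ∈ S i})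
  have first_le {v : V} {i : Fin m} (hv : v ∈ S i) : first v ≤ i := Nat.sInf_le ⟨i, hv, rfl⟩
  have first_mem {v : V} {i : Fin m} (hv : v ∈ S i) : ∃ j : Fin m, v ∈ S j ∧ (j : ℕ) = first v :=
    Nat.sInf_mem (s := Fin.val '' {i | v ∈ S i}) ⟨i, i, hv, rfl⟩
  refine isAcyclic_of_rank (Sum.elim (fun v => 2 * first v + 1) (fun i => 2 * i)) ?_ ?_
  · rintro (v | i) (w | j) h <;>
      simp only [incidenceGraph_not_adj_inl_inl, incidenceGraph_not_adj_inr_inr, elim_inl,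
        elim_inr, ne_eq] at h ⊢ <;> omega
  · rintro (v | i) (w | j) (x | k) hw hx hwr hxr <;>
      simp only [incidenceGraph_adj_inl_inr, incidenceGraph_adj_inr_inl, elim_inl, elim_inr,
        incidenceGraph_not_adj_inl_inl, incidenceGraph_not_adj_inr_inr, inl.injEq,
        inr.injEq] at hw hx hwr hxr ⊢
    · exact Fin.ext (by have := first_le hw; have := first_le hx; omega)
    · obtain ⟨j, hwj, hj⟩ := first_mem hw
      obtain ⟨k, hxk, hk⟩ := first_mem hx
      exact hS i ⟨hw, Set.mem_iUnion₂.2 ⟨j, by omega, hwj⟩⟩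
        ⟨hx, Set.mem_iUnion₂.2 ⟨k, by omega, hxk⟩⟩

theorem incidenceGraph_reachable (hS : ∀ i : Fin m, 0 < (i : ℕ) → (S i ∩ unionBefore S i).Nonempty)
    (i j : Fin m) : (incidenceGraph S).Reachable (inr i) (inr j) := by
  suffices h0 : ∀ i z : Fin m, (z : ℕ) = 0 → (incidenceGraph S).Reachable (inr i) (inr z) from
    (h0 i ⟨0, i.pos⟩ rfl).trans (h0 j ⟨0, i.pos⟩ rfl).symm
  intro i z hz
  induction i using WellFoundedLT.induction with
  | _ i ih =>
    rcases Nat.eq_zero_or_pos i with hi | hi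
    · obtain rfl : i = z := Fin.ext (by omega)
      rfl
    · obtain ⟨x, hxi, hx⟩ := hS i hi
      obtain ⟨k, hk, hxk⟩ := Set.mem_iUnion₂.1 hx
      exact (incidenceGraph_adj_inr_inl.2 hxi).reachable.trans
        ((incidenceGraph_adj_inl_inr.2 hxk).reachable.trans (ih k hk))

theorem inter_subsingleton_of_inter_unionBefore_subsingleton
    (hS : ∀ i, (S i ∩ unionBefore S i).Subsingleton) {i j : Fin m} (hij : i ≠ j) :
    (S i ∩ S j).Subsingleton := by
  wlog h : j < i generalizing i j
  · rw [Set.inter_comm]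
    exact this hij.symm (lt_of_le_of_ne (not_lt.1 h) hij)
  exact (hS i).anti (Set.inter_subset_inter_right _
    (Set.subset_iUnion₂ (s := fun (k : Fin m) (_ : (k : ℕ) < i) => S k) j h))

end OrderedFamily

section Cycles

variable {V : Type*} {A : V → V → Prop}

theorem IsCycleSet.one_lt_ncard_cycleVerts {s : Set (V × V)} (hs : IsCycleSet A s) :
    1 < (cycleVerts s).ncard := by
  obtain ⟨n, c, ⟨hn, hc, -⟩, rfl⟩ := hs
  have : cycleVerts (CycleArcs c) = Set.range c := by
    ext x
    simp [cycleVerts, CycleArcs, eq_comm]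
  rw [this, Set.ncard_range_of_injective hc, Nat.card_eq_fintype_card, Fintype.card_fin]
  omega

theorem isCyclePathSeq_map_iff {ι : Type*} {C : ι → Set (V × V)} (hC : ∀ i, IsCycleSet A (C i))
    (hsub : ∀ i j, i ≠ j → (cycleVerts (C i) ∩ cycleVerts (C j)).Subsingleton) {l : List ι} :
    IsCyclePathSeq A (l.map C) ↔ IsSetPath (fun i => cycleVerts (C i)) l := by
  have hcard {i j : ι} (hij : i ≠ j) :
      (cycleVerts (C i) ∩ cycleVerts (C j)).ncard ≤ 1 ∧
        ((cycleVerts (C i) ∩ cycleVerts (C j)).ncard = 1 ↔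
          (cycleVerts (C i) ∩ cycleVerts (C j)).Nonempty) := by
    rcases (hsub i j hij).eq_empty_or_singleton with h | ⟨x, h⟩ <;> simp [h]
  unfold IsCyclePathSeq IsSetPath
  simp only [List.forall_mem_map, hC, implies_true, true_and, List.length_map,
    List.get_eq_getElem, List.getElem_map]
  constructor
  · intro h
    have hnd : l.Nodup := List.pairwise_iff_getElem.2 fun i j hi hj hij heq => by
      have := (h i j hi hj hij.ne).1
      rw [heq, Set.inter_self] at this
      exact (hC _).one_lt_ncard_cycleVerts.not_ge this
    exact ⟨hnd, fun i j hi hj hij =>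
      (hcard (hnd.getElem_inj_iff.not.2 hij)).2.symm.trans (h i j hi hj hij).2⟩
  · rintro ⟨hnd, h⟩ i j hi hj hij
    have hne : l[i] ≠ l[j] := hnd.getElem_inj_iff.not.2 hij
    exact ⟨(hcard hne).1, (hcard hne).2.trans (h i j hi hj hij)⟩

end Cycles

theorem cycleTree_unique_cyclePath_general {V : Type u} (A : V → V → Prop)
    (h : IsCycleTree A) (s t : Set (V × V))
    (hs : IsCycleSet A s) (ht : IsCycleSet A t) :
    ∃! L : List (Set (V × V)),
      IsCyclePathSeq A L ∧ L.head? = some s ∧ L.getLast? = some t := by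
  obtain ⟨-, m, C, hCinj, hC, hCall, hattach⟩ := h
  let S : Fin m → Set V := fun i => cycleVerts (C i)
  have hattach' : ∀ i : Fin m, 0 < (i : ℕ) → ∃ x, S i ∩ unionBefore S i = {x} := hattach
  have hsub (i : Fin m) : (S i ∩ unionBefore S i).Subsingleton := by
    rcases Nat.eq_zero_or_pos i with hi | hi
    · simp [unionBefore, hi]
    · obtain ⟨x, hx⟩ := hattach' i hi
      exact hx ▸ Set.subsingleton_singleton
  have hG : (incidenceGraph S).IsAcyclic := incidenceGraph_isAcyclic hsub
  have hpath (l : List (Fin m)) : IsCyclePathSeq A (l.map C) ↔ IsSetPath S l :=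
    isCyclePathSeq_map_iff hC fun _ _ => inter_subsingleton_of_inter_unionBefore_subsingleton hsub
  obtain ⟨a, rfl⟩ := hCall s hs
  obtain ⟨b, rfl⟩ := hCall t ht
  obtain ⟨p, hp⟩ := (incidenceGraph_reachable (fun i hi => (hattach' i hi).elim fun x hx =>
    hx ▸ Set.singleton_nonempty x) a b).exists_isPath
  obtain ⟨hpS, hpa, hpb⟩ := isSetPath_rightSupport hG hp
  refine ⟨p.rightSupport.map C, ⟨(hpath _).2 hpS, by simp [hpa], by simp [hpb]⟩, ?_⟩
  rintro L ⟨hL, hLa, hLb⟩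
  obtain ⟨l, rfl⟩ : L ∈ Set.range (List.map C) :=
    Set.range_list_map C ▸ fun x hx => hCall x (hL.1 x hx)
  obtain ⟨q, hq, rfl, -⟩ := exists_isPath_rightSupport_eq ((hpath l).1 hL)
    (by simpa [hCinj.eq_iff] using hLa) (by simpa [hCinj.eq_iff] using hLb)
  rw [show q = p from congrArg Subtype.val ((hG.subsingleton_path _ _).elim ⟨q, hq⟩ ⟨p, hp⟩)]

/-- Let `T` be a cycle-tree and let `C ≠ C'` be two directed cycles of `T`.
Then there exists a unique cycle-path contained in `T` whose end-cycles are `C`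
and `C'`: a unique sequence `C = C₀, C₁, …, C_m = C'` of cycles of `T` such that
`|V(C_i) ∩ V(C_j)| ≤ 1` for all distinct `i, j`, with equality iff `|i − j| = 1`. -/
theorem cycleTree_unique_cyclePath {V : Type u} (A : V → V → Prop)
    (h : IsCycleTree A) (s t : Set (V × V))
    (hs : IsCycleSet A s) (ht : IsCycleSet A t) (hst : s ≠ t) :
    ∃! L : List (Set (V × V)),
      IsCyclePathSeq A L ∧ L.head? = some s ∧ L.getLast? = some t :=
  cycleTree_unique_cyclePath_general A h s t hs ht
end
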